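/- arXiv:math/0210194 — 16 statements merged into one kernel-verified Lean document; each statement's English description precedes it below -/
import Mathlib

section
/- Let H be a group. Then the following are equivalent: (i) H is logically noetherian; (ii) for every group G, the following two conditions on G are equivalent: (a) every quasi-identity (in any number of variables) that holds in H also holds in G, and (b) for every finitely generated subgroup K of G, homomorphisms into H separate the points of K. (In the paper's terminology, the locally closed prevariety LSC(H) coincides with the quasivariety qVar(H) if and only if H is logically noetherian.) -/
/-- The `H`-closure of a set `S` of elements of the free group on `n` generators:
all `w` killed by every homomorphism to `H` killing `S`. -/
def GClosure (H : Type*) [Group H] {n : ℕ} (S : Set (FreeGroup (Fin n))) :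
    Set (FreeGroup (Fin n)) :=
  {w | ∀ φ : FreeGroup (Fin n) →* H, (∀ s ∈ S, φ s = 1) → φ w = 1}

/-- The quasi-identity `(S₀, w₀)` holds in the group `G`. -/
def QuasiIdHolds (G : Type*) [Group G] {n : ℕ}
    (S₀ : Finset (FreeGroup (Fin n))) (w₀ : FreeGroup (Fin n)) : Prop :=
  ∀ φ : FreeGroup (Fin n) →* G, (∀ s ∈ S₀, φ s = 1) → φ w₀ = 1

/-- A group `H` is logically noetherian if every membership in an `H`-closure is witnessed
by a finite subset. -/
def LogicallyNoetherian (H : Type*) [Group H] : Prop :=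
  ∀ (n : ℕ) (S : Set (FreeGroup (Fin n))) (w : FreeGroup (Fin n)),
    w ∈ GClosure H S →
      ∃ S₀ : Finset (FreeGroup (Fin n)), ↑S₀ ⊆ S ∧ w ∈ GClosure H (S₀ : Set (FreeGroup (Fin n)))

/-- Homomorphisms into `H` separate the points of `K`. -/
def SeparatesPoints (H K : Type*) [Group H] [Group K] : Prop :=
  ∀ a b : K, a ≠ b → ∃ φ : K →* H, φ a ≠ φ b

open Filter

section Aux

variable {H : Type} [Group H]

/-- If homomorphisms to `H` separate points on finitely generated subgroups of `G`,
then any homomorphism `F → G` killing `S` also kills every element of the `H`-closure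
of `S`. -/
lemma sep_key {G : Type} [Group G]
    (hb : ∀ K : Subgroup G, K.FG → SeparatesPoints H K)
    {n : ℕ} {S : Set (FreeGroup (Fin n))} {w : FreeGroup (Fin n)}
    (hw : w ∈ GClosure H S)
    (ψ : FreeGroup (Fin n) →* G) (hψ : ∀ s ∈ S, ψ s = 1) : ψ w = 1 := by
  classical
  by_contra hne
  set K : Subgroup G := Subgroup.closure (Set.range fun i => ψ (FreeGroup.of i)) with hKdef
  have hψlift : ψ = FreeGroup.lift (fun i => ψ (FreeGroup.of i)) :=
    (FreeGroup.ext_hom _ _ (fun a => by simp)).symm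
  have hmem : ∀ x, ψ x ∈ K := by
    intro x
    have : ψ x ∈ (FreeGroup.lift (fun i => ψ (FreeGroup.of i))).range := by
      rw [← hψlift]; exact ⟨x, rfl⟩
    rwa [FreeGroup.range_lift_eq_closure] at this
  have hKfg : K.FG := by
    refine ⟨Finset.image (fun i => ψ (FreeGroup.of i)) Finset.univ, ?_⟩
    rw [Finset.coe_image, Finset.coe_univ, Set.image_univ]
  set ψ' : FreeGroup (Fin n) →* K := ψ.codRestrict K hmem with hψ'def
  have ha : ψ' w ≠ 1 := fun h => hne (Subtype.ext_iff.mp h)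
  obtain ⟨χ, hχ⟩ := hb K hKfg (ψ' w) 1 ha
  have hkill : ∀ s ∈ S, (χ.comp ψ') s = 1 := by
    intro s hs
    have h1 : ψ' s = 1 := Subtype.ext (hψ s hs)
    simp [MonoidHom.comp_apply, h1]
  have := hw (χ.comp ψ') hkill
  simp only [MonoidHom.comp_apply] at this
  exact hχ (by simpa using this)

/-- Logically noetherian plus "all quasi-identities of `H` hold in `G`" implies
separation of points on f.g. subgroups. -/
lemma qvar_to_lsc (hLN : LogicallyNoetherian H) {G : Type} [Group G]
    (ha : ∀ (n : ℕ) (S₀ : Finset (FreeGroup (Fin n))) (w₀ : FreeGroup (Fin n)),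
      QuasiIdHolds H S₀ w₀ → QuasiIdHolds G S₀ w₀)
    (K : Subgroup G) (hK : K.FG) : SeparatesPoints H K := by
  classical
  intro a b hab
  obtain ⟨T, hT⟩ := hK
  set n := T.card with hn
  set g : Fin n → G := fun i => ((T.equivFin.symm i : T) : G) with hg
  have hgK : ∀ i, g i ∈ K := by
    intro i
    rw [← hT]
    exact Subgroup.subset_closure (T.equivFin.symm i).2
  set π : FreeGroup (Fin n) →* K := FreeGroup.lift (fun i => ⟨g i, hgK i⟩) with hπ
  set π' : FreeGroup (Fin n) →* G := K.subtype.comp π with hπ'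
  have hπ'lift : π' = FreeGroup.lift g := FreeGroup.ext_hom _ _ (fun i => by simp [hπ', hπ])
  have hrangeg : Set.range g = (T : Set G) := by
    ext x
    constructor
    · rintro ⟨i, rfl⟩
      exact (T.equivFin.symm i).2
    · intro hx
      exact ⟨T.equivFin ⟨x, hx⟩, by simp [hg]⟩
  have hπ'range : π'.range = K := by
    rw [hπ'lift, FreeGroup.range_lift_eq_closure, hrangeg, hT]
  have hπsurj : Function.Surjective π := by
    intro k
    have : (k : G) ∈ π'.range := by rw [hπ'range]; exact k.2
    obtain ⟨x, hx⟩ := this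
    exact ⟨x, Subtype.ext (by simpa [hπ'] using hx)⟩
  obtain ⟨u, hu⟩ := hπsurj (a * b⁻¹)
  set S : Set (FreeGroup (Fin n)) := {x | π' x = 1} with hS
  have hnotin : u ∉ GClosure H S := by
    intro hin
    obtain ⟨S₀, hS₀sub, hS₀⟩ := hLN n S u hin
    have h1 := ha n S₀ u hS₀ π' (fun s hs => hS₀sub hs)
    have h2 : π u = 1 := Subtype.ext (by simpa [hπ'] using h1)
    rw [hu] at h2
    exact hab (by
      have := congrArg (· * b) h2
      simpa [mul_assoc] using this)
  simp only [GClosure, Set.mem_setOf_eq, not_forall] at hnotin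
  obtain ⟨φ₀, hφ₀S, hφ₀u⟩ := hnotin
  have hker : ∀ x ∈ MonoidHom.ker π, φ₀ x = 1 := by
    intro x hx
    apply hφ₀S
    show π' x = 1
    rw [hπ']
    simp only [MonoidHom.comp_apply]
    rw [MonoidHom.mem_ker] at hx
    rw [hx, map_one]
  set e := QuotientGroup.quotientKerEquivOfSurjective π hπsurj with he
  set χ : K →* H := (QuotientGroup.lift (MonoidHom.ker π) φ₀ hker).comp
    (e.symm : K ≃* _).toMonoidHom with hχdef
  have hχπ : ∀ x, χ (π x) = φ₀ x := by
    intro x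
    have hsymm : e.symm (π x) = QuotientGroup.mk x := by
      rw [MulEquiv.symm_apply_eq]
      rfl
    simp only [hχdef, MonoidHom.comp_apply, MulEquiv.coe_toMonoidHom, hsymm]
    rfl
  refine ⟨χ, fun hEq => hφ₀u ?_⟩
  have : χ (a * b⁻¹) = 1 := by
    rw [map_mul, map_inv, hEq, mul_inv_cancel]
  rw [← hu] at this
  rw [← hχπ u]
  exact this

end Aux

/-- `H` is logically noetherian iff membership in `qVar(H)` coincides with membership
in `LSC(H)` for every group `G`. -/
theorem logicallyNoetherian_iff_qvar_eq_lsc (H : Type) [Group H] :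
    LogicallyNoetherian H ↔
      ∀ (G : Type) [Group G],
        ((∀ (n : ℕ) (S₀ : Finset (FreeGroup (Fin n))) (w₀ : FreeGroup (Fin n)),
            QuasiIdHolds H S₀ w₀ → QuasiIdHolds G S₀ w₀) ↔
          (∀ K : Subgroup G, K.FG → SeparatesPoints H K)) := by
  classical
  constructor
  · intro hLN G _
    constructor
    · intro ha
      exact qvar_to_lsc hLN ha
    · intro hb n S₀ w₀ hH ψ hψ
      exact sep_key hb (S := (S₀ : Set (FreeGroup (Fin n)))) hH ψ
        (fun s hs => hψ s (by exact_mod_cast hs))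
  · intro hRHS n S w hw
    by_contra hno
    push_neg at hno
    -- for each finite set `T` choose a homomorphism killing `T ∩ S` but not `w`
    have hex : ∀ T : Finset (FreeGroup (Fin n)), ∃ φ : FreeGroup (Fin n) →* H,
        (∀ s ∈ T, s ∈ S → φ s = 1) ∧ φ w ≠ 1 := by
      intro T
      have h := hno (T.filter (· ∈ S)) (fun x hx => by
        simp only [Finset.coe_filter, Set.mem_setOf_eq] at hx
        exact hx.2)
      simp only [GClosure, Set.mem_setOf_eq, not_forall] at h
      obtain ⟨φ, h1, h2⟩ := h
      exact ⟨φ, fun s hs hsS => h1 s (by simp [Finset.mem_filter, hs, hsS]), h2⟩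
    choose φ hφ1 hφ2 using hex
    set L : Filter (Finset (FreeGroup (Fin n))) := atTop with hL
    set G := Filter.Germ L H with hG
    set Φ : FreeGroup (Fin n) →* (Finset (FreeGroup (Fin n)) → H) :=
      Pi.monoidHom (fun T => φ T) with hΦ
    set Ψ : FreeGroup (Fin n) →* G := (Filter.Germ.coeMulHom L).comp Φ with hΨ
    -- Ψ kills S
    have hΨS : ∀ s ∈ S, Ψ s = 1 := by
      intro s hs
      show ((Φ s : Finset (FreeGroup (Fin n)) → H) : Filter.Germ L H) = 1
      rw [← Filter.Germ.coe_one, Filter.Germ.coe_eq]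
      refine eventually_atTop.2 ⟨{s}, fun T hT => ?_⟩
      have hsT : s ∈ T := hT (Finset.mem_singleton_self s)
      show φ T s = 1
      exact hφ1 T s hsT hs
    -- Ψ does not kill w
    have hΨw : Ψ w ≠ 1 := by
      intro h
      have h' : (fun T => φ T w) =ᶠ[L] (1 : Finset (FreeGroup (Fin n)) → H) := by
        rw [← Filter.Germ.coe_eq, Filter.Germ.coe_one]
        exact h
      obtain ⟨T, hT⟩ := h'.exists
      exact hφ2 T (by simpa using hT)
    -- every quasi-identity of H holds in G (reduced power)
    have haG : ∀ (m : ℕ) (S₀ : Finset (FreeGroup (Fin m))) (w₀ : FreeGroup (Fin m)),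
        QuasiIdHolds H S₀ w₀ → QuasiIdHolds G S₀ w₀ := by
      intro m S₀ w₀ hH ψ hψ
      have hrep : ∀ i : Fin m, ∃ f : Finset (FreeGroup (Fin n)) → H, ((f : Filter.Germ L H) = ψ (FreeGroup.of i)) :=
        fun i => Filter.Germ.inductionOn (ψ (FreeGroup.of i)) (fun f => ⟨f, rfl⟩)
      choose f hf using hrep
      set ψt : FreeGroup (Fin m) →* (Finset (FreeGroup (Fin n)) → H) := FreeGroup.lift f with hψt
      have hcomm : (Filter.Germ.coeMulHom L).comp ψt = ψ :=
        FreeGroup.ext_hom _ _ (fun i => by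
          simp only [MonoidHom.comp_apply, hψt, FreeGroup.lift_apply_of]
          exact hf i)
      have hev : ∀ᶠ T in L, ∀ s ∈ S₀, ψt s T = 1 := by
        rw [Filter.eventually_all_finset]
        intro s hs
        have h2 := congrArg (fun (χ : FreeGroup (Fin m) →* G) => χ s) hcomm
        simp only [MonoidHom.comp_apply] at h2
        have h1 : ((ψt s : Finset (FreeGroup (Fin n)) → H) : Filter.Germ L H) = 1 :=
          h2.trans (hψ s hs)
        rw [← Filter.Germ.coe_one, Filter.Germ.coe_eq] at h1
        exact h1
      have hevw : ∀ᶠ T in L, ψt w₀ T = 1 := by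
        refine hev.mono (fun T hT => ?_)
        have := hH ((Pi.evalMonoidHom (fun _ : Finset (FreeGroup (Fin n)) => H) T).comp ψt)
          (fun s hs => hT s hs)
        simpa using this
      have : ((ψt w₀ : Finset (FreeGroup (Fin n)) → H) : Filter.Germ L H) = 1 := by
        rw [← Filter.Germ.coe_one, Filter.Germ.coe_eq]
        exact hevw
      rw [← hcomm]
      exact this
    have hb := (hRHS G).mp haG
    have := sep_key hb hw Ψ hΨS
    exact hΨw this
end

section
/- Let P be a field and H an associative unital P-algebra. Then the following are equivalent: (i) H is logically noetherian; (ii) for every associative unital P-algebra G, the following two conditions on G are equivalent: (a) every quasi-identity (in any number of variables) that holds in H also holds in G, and (b) for every finitely generated P-subalgebra K of G, P-algebra homomorphisms into H separate the points of K. -/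
/-- The `H`-closure of a set `S` of elements of the free associative `P`-algebra on `n`
generators: all `w` killed by every `P`-algebra homomorphism to `H` killing `S`. -/
def AClosure (P : Type*) [CommSemiring P] (H : Type*) [Semiring H] [Algebra P H] {n : ℕ}
    (S : Set (FreeAlgebra P (Fin n))) : Set (FreeAlgebra P (Fin n)) :=
  {w | ∀ φ : FreeAlgebra P (Fin n) →ₐ[P] H, (∀ s ∈ S, φ s = 0) → φ w = 0}

/-- The quasi-identity `(S₀, w₀)` holds in the `P`-algebra `G`. -/
def AQuasiIdHolds (P : Type*) [CommSemiring P] (G : Type*) [Semiring G] [Algebra P G] {n : ℕ}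
    (S₀ : Finset (FreeAlgebra P (Fin n))) (w₀ : FreeAlgebra P (Fin n)) : Prop :=
  ∀ φ : FreeAlgebra P (Fin n) →ₐ[P] G, (∀ s ∈ S₀, φ s = 0) → φ w₀ = 0

/-- A `P`-algebra `H` is logically noetherian. -/
def ALogicallyNoetherian (P : Type*) [CommSemiring P] (H : Type*) [Semiring H] [Algebra P H] :
    Prop :=
  ∀ (n : ℕ) (S : Set (FreeAlgebra P (Fin n))) (w : FreeAlgebra P (Fin n)),
    w ∈ AClosure P H S →
      ∃ S₀ : Finset (FreeAlgebra P (Fin n)), ↑S₀ ⊆ S ∧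
        w ∈ AClosure P H (S₀ : Set (FreeAlgebra P (Fin n)))

section Aux
variable {P : Type*} [CommRing P] {H : Type*} [Ring H] [Algebra P H] {n : ℕ}

/-- factor a hom through the range of another -/
noncomputable def factorThrough {A G : Type*} [Ring A] [Ring G]
    [Algebra P A] [Algebra P G]
    (π : A →ₐ[P] G) (ψ : A →ₐ[P] H) (hk : ∀ x, π x = 0 → ψ x = 0) :
    { φ : π.range →ₐ[P] H // ∀ x, φ (π.rangeRestrict x) = ψ x } := by
  classical
  set f₀ : π.range → H := fun k => ψ (π.mem_range.mp k.2).choose with hf₀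
  have key : ∀ x : A, f₀ (π.rangeRestrict x) = ψ x := by
    intro x
    have h1 : π ((π.mem_range.mp (π.rangeRestrict x).2).choose) = π x :=
      (π.mem_range.mp (π.rangeRestrict x).2).choose_spec
    have h2 : π ((π.mem_range.mp (π.rangeRestrict x).2).choose - x) = 0 := by
      rw [map_sub, h1, sub_self]
    have h3 := hk _ h2
    rw [map_sub, sub_eq_zero] at h3
    exact h3
  have hsurj : Function.Surjective (π.rangeRestrict) := by
    intro k
    obtain ⟨x, hx⟩ := π.mem_range.mp k.2
    exact ⟨x, Subtype.ext hx⟩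
  refine ⟨{ toFun := f₀
            map_one' := ?_
            map_mul' := ?_
            map_zero' := ?_
            map_add' := ?_
            commutes' := ?_ }, key⟩
  · show f₀ 1 = 1
    have : (1 : π.range) = π.rangeRestrict 1 := (map_one _).symm
    rw [this, key, map_one]
  · intro a b
    obtain ⟨x, rfl⟩ := hsurj a; obtain ⟨y, rfl⟩ := hsurj b
    show f₀ (π.rangeRestrict x * π.rangeRestrict y) =
      f₀ (π.rangeRestrict x) * f₀ (π.rangeRestrict y)
    rw [← map_mul π.rangeRestrict x y, key, key, key, map_mul]
  · show f₀ 0 = 0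
    have : (0 : π.range) = π.rangeRestrict 0 := (map_zero _).symm
    rw [this, key, map_zero]
  · intro a b
    obtain ⟨x, rfl⟩ := hsurj a; obtain ⟨y, rfl⟩ := hsurj b
    show f₀ (π.rangeRestrict x + π.rangeRestrict y) =
      f₀ (π.rangeRestrict x) + f₀ (π.rangeRestrict y)
    rw [← map_add π.rangeRestrict x y, key, key, key, map_add]
  · intro r
    show f₀ (algebraMap P π.range r) = algebraMap P H r
    have : algebraMap P π.range r = π.rangeRestrict (algebraMap P A r) :=
      (AlgHom.commutes _ r).symm
    rw [this, key, AlgHom.commutes]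

theorem range_fg' {G : Type*} [Ring G] [Algebra P G]
    (φ : FreeAlgebra P (Fin n) →ₐ[P] G) : φ.range.FG := by
  rw [Subalgebra.fg_def]
  refine ⟨φ '' Set.range (FreeAlgebra.ι P), (Set.finite_range _).image _, ?_⟩
  rw [← AlgHom.map_adjoin, FreeAlgebra.adjoin_range_ι, Algebra.map_top]

theorem exists_surj_of_fg {G : Type*} [Ring G] [Algebra P G]
    (K : Subalgebra P G) (hK : K.FG) :
    ∃ (m : ℕ) (π : FreeAlgebra P (Fin m) →ₐ[P] G), π.range = K := by
  obtain ⟨t, ht⟩ := hK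
  refine ⟨t.card, FreeAlgebra.lift P (fun i => ((t.equivFin.symm i : t) : G)), ?_⟩
  set g : Fin t.card → G := fun i => ((t.equivFin.symm i : t) : G) with hg
  have hrange : Set.range g = (t : Set G) := by
    ext x
    constructor
    · rintro ⟨i, rfl⟩; exact (t.equivFin.symm i).2
    · intro hx
      exact ⟨t.equivFin ⟨x, hx⟩, by simp [hg]⟩
  have h1 : (FreeAlgebra.lift P g).range =
      Subalgebra.map (FreeAlgebra.lift P g) ⊤ := (Algebra.map_top _).symm
  rw [h1, ← FreeAlgebra.adjoin_range_ι P (Fin t.card), AlgHom.map_adjoin,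
    ← Set.range_comp]
  have h2 : (FreeAlgebra.lift P g) ∘ FreeAlgebra.ι P = g := by
    funext i; simp
  rw [h2, hrange, ht]
end Aux

section Aux2
variable (P : Type*) [CommRing P] (H : Type*) [Ring H] [Algebra P H] {n : ℕ}

/-- the union of the closures of finite subsets of `S` -/
def JSet (S : Set (FreeAlgebra P (Fin n))) : Set (FreeAlgebra P (Fin n)) :=
  {x | ∃ S₀ : Finset (FreeAlgebra P (Fin n)), ↑S₀ ⊆ S ∧ x ∈ AClosure P H (↑S₀ : Set _)}

variable {P H}
variable {S : Set (FreeAlgebra P (Fin n))}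

theorem JSet.zero_mem : (0 : FreeAlgebra P (Fin n)) ∈ JSet P H S :=
  ⟨∅, by simp, fun φ _ => map_zero φ⟩

theorem JSet.add_mem {x y : FreeAlgebra P (Fin n)} (hx : x ∈ JSet P H S)
    (hy : y ∈ JSet P H S) : x + y ∈ JSet P H S := by
  classical
  obtain ⟨A, hAS, hxA⟩ := hx
  obtain ⟨B, hBS, hyB⟩ := hy
  refine ⟨A ∪ B, ?_, fun φ hφ => ?_⟩
  · rw [Finset.coe_union]; exact Set.union_subset hAS hBS
  · have hA : φ x = 0 := hxA φ (fun s hs => hφ s (by simp [Finset.mem_coe] at hs ⊢; tauto))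
    have hB : φ y = 0 := hyB φ (fun s hs => hφ s (by simp [Finset.mem_coe] at hs ⊢; tauto))
    rw [map_add, hA, hB, add_zero]

theorem JSet.neg_mem {x : FreeAlgebra P (Fin n)} (hx : x ∈ JSet P H S) :
    -x ∈ JSet P H S := by
  obtain ⟨A, hAS, hxA⟩ := hx
  exact ⟨A, hAS, fun φ hφ => by rw [map_neg, hxA φ hφ, neg_zero]⟩

theorem JSet.mul_mem_left (r : FreeAlgebra P (Fin n)) {x : FreeAlgebra P (Fin n)}
    (hx : x ∈ JSet P H S) : r * x ∈ JSet P H S := by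
  obtain ⟨A, hAS, hxA⟩ := hx
  exact ⟨A, hAS, fun φ hφ => by rw [map_mul, hxA φ hφ, mul_zero]⟩

theorem JSet.mul_mem_right (r : FreeAlgebra P (Fin n)) {x : FreeAlgebra P (Fin n)}
    (hx : x ∈ JSet P H S) : x * r ∈ JSet P H S := by
  obtain ⟨A, hAS, hxA⟩ := hx
  exact ⟨A, hAS, fun φ hφ => by rw [map_mul, hxA φ hφ, zero_mul]⟩

variable (P H S)

/-- the ring congruence induced by `JSet` -/
def jCon : RingCon (FreeAlgebra P (Fin n)) where
  r x y := x - y ∈ JSet P H S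
  iseqv := by
    refine ⟨fun x => by simpa using JSet.zero_mem, fun {x y} h => ?_, fun {x y z} h1 h2 => ?_⟩
    · simpa [neg_sub] using JSet.neg_mem h
    · simpa using JSet.add_mem h1 h2
  mul' := by
    intro a b c d h1 h2
    show a * c - b * d ∈ JSet P H S
    have : a * c - b * d = a * (c - d) + (a - b) * d := by
      rw [mul_sub, sub_mul]; abel
    rw [this]
    exact JSet.add_mem (JSet.mul_mem_left _ h2) (JSet.mul_mem_right _ h1)
  add' := by
    intro a b c d h1 h2
    show a + c - (b + d) ∈ JSet P H S
    have : a + c - (b + d) = (a - b) + (c - d) := by abel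
    rw [this]
    exact JSet.add_mem h1 h2

theorem jCon_iff (x y : FreeAlgebra P (Fin n)) :
    (jCon P H S) x y ↔ x - y ∈ JSet P H S := Iff.rfl

/-- the quotient projection as an algebra hom -/
def jProj : FreeAlgebra P (Fin n) →ₐ[P] (jCon P H S).Quotient :=
  { (jCon P H S).mk' with commutes' := fun _ => rfl }

theorem jProj_surjective : Function.Surjective (jProj P H S) := by
  intro q
  obtain ⟨x, rfl⟩ := Quot.exists_rep q
  exact ⟨x, rfl⟩

theorem jProj_eq_zero_iff (x : FreeAlgebra P (Fin n)) :
    jProj P H S x = 0 ↔ x ∈ JSet P H S := by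
  have h0 : (0 : (jCon P H S).Quotient) = (jCon P H S).mk' 0 := (map_zero _).symm
  have hm : ∀ y : FreeAlgebra P (Fin n), jProj P H S y = (jCon P H S).mk' y := fun _ => rfl
  constructor
  · intro h
    have hc : (jCon P H S) x 0 := (jCon P H S).eq.mp ((hm x ▸ h).trans h0)
    have := (jCon_iff P H S x 0).mp hc
    simpa using this
  · intro h
    rw [hm, h0]
    exact (jCon P H S).eq.mpr ((jCon_iff P H S x 0).mpr (by simpa using h))

end Aux2

/-- A `P`-algebra `H` is logically noetherian iff, for every `P`-algebra `G`, `G` satisfies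
all quasi-identities of `H` exactly when every finitely generated subalgebra of `G` has
its points separated by `P`-algebra homomorphisms into `H`. -/
theorem aLogicallyNoetherian_iff_qvar_eq_lsc (P : Type) [Field P]
    (H : Type) [Ring H] [Algebra P H] :
    ALogicallyNoetherian P H ↔
      ∀ (G : Type) [Ring G] [Algebra P G],
        ((∀ (n : ℕ) (S₀ : Finset (FreeAlgebra P (Fin n))) (w₀ : FreeAlgebra P (Fin n)),
            AQuasiIdHolds P H S₀ w₀ → AQuasiIdHolds P G S₀ w₀) ↔
          (∀ K : Subalgebra P G, K.FG →
            ∀ a b : K, a ≠ b → ∃ φ : K →ₐ[P] H, φ a ≠ φ b)) := by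
  classical
  constructor
  · -- logically noetherian → equivalence for every G
    intro hLN G _ _
    constructor
    · -- (a) → (b)
      intro hqi K hK a b hab
      obtain ⟨m, π, hπ⟩ := exists_surj_of_fg K hK
      have haR : (a : G) ∈ π.range := hπ.symm ▸ a.2
      have hbR : (b : G) ∈ π.range := hπ.symm ▸ b.2
      obtain ⟨u, hu⟩ := π.mem_range.mp haR
      obtain ⟨v, hv⟩ := π.mem_range.mp hbR
      set S : Set (FreeAlgebra P (Fin m)) := {x | π x = 0} with hS
      have hwS : (u - v) ∉ AClosure P H S := by
        intro hwmem
        obtain ⟨S₀, hS₀S, hw₀⟩ := hLN m S (u - v) hwmem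
        have hq : AQuasiIdHolds P H S₀ (u - v) := fun χ hχ => hw₀ χ (fun s hs => hχ s hs)
        have hzero := hqi m S₀ (u - v) hq π (fun s hs => hS₀S (Finset.mem_coe.mpr hs))
        rw [map_sub, hu, hv, sub_eq_zero] at hzero
        exact hab (Subtype.ext hzero)
      have hwS' : ∃ ψ : FreeAlgebra P (Fin m) →ₐ[P] H,
          (∀ s ∈ S, ψ s = 0) ∧ ψ (u - v) ≠ 0 := by
        by_contra hcon
        push_neg at hcon
        exact hwS (fun ψ hψ => hcon ψ hψ)
      obtain ⟨ψ, hψS, hψw⟩ := hwS'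
      obtain ⟨φ₀, hφ₀⟩ := factorThrough π ψ (fun x hx => hψS x hx)
      set e := Subalgebra.equivOfEq K π.range hπ.symm
      refine ⟨φ₀.comp e.toAlgHom, ?_⟩
      have hea : e a = π.rangeRestrict u := Subtype.ext (by simpa [e] using hu.symm)
      have heb : e b = π.rangeRestrict v := Subtype.ext (by simpa [e] using hv.symm)
      intro hcontra
      apply hψw
      have : ψ u = ψ v := by
        rw [← hφ₀ u, ← hφ₀ v, ← hea, ← heb]
        simpa using hcontra
      rw [map_sub, this, sub_self]
    · -- (b) → (a)
      intro hsep m S₀ w₀ hH φ hφS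
      by_contra hne
      have hKfg := range_fg' φ
      have ha : φ.rangeRestrict w₀ ≠ 0 := by
        intro h
        exact hne (by simpa using congrArg Subtype.val h)
      obtain ⟨χ, hχ⟩ := hsep φ.range hKfg (φ.rangeRestrict w₀) 0 ha
      have h1 : ∀ s ∈ S₀, (χ.comp φ.rangeRestrict) s = 0 := by
        intro s hs
        have h0 : φ.rangeRestrict s = 0 := Subtype.ext (by simpa using hφS s hs)
        simp [AlgHom.comp_apply, h0]
      have h2 := hH (χ.comp φ.rangeRestrict) h1
      rw [AlgHom.comp_apply] at h2
      exact hχ (by rw [h2, map_zero])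
  · -- equivalence for every G → logically noetherian
    intro hrhs m S w hw
    by_contra hno
    push_neg at hno
    have hiff := hrhs ((jCon P H S).Quotient)
    have hqa : ∀ (n' : ℕ) (T : Finset (FreeAlgebra P (Fin n')))
        (v : FreeAlgebra P (Fin n')), AQuasiIdHolds P H T v →
        AQuasiIdHolds P ((jCon P H S).Quotient) T v := by
      intro n' T v hHqi φ hφT
      choose x hx using fun i : Fin n' => jProj_surjective P H S (φ (FreeAlgebra.ι P i))
      set ψ := FreeAlgebra.lift P x with hψ
      have hcomp : (jProj P H S).comp ψ = φ := by
        apply FreeAlgebra.hom_ext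
        funext i
        simp [hψ, hx i]
      have hmemJ : ∀ t ∈ T, ψ t ∈ JSet P H S := by
        intro t ht
        rw [← jProj_eq_zero_iff]
        have : jProj P H S (ψ t) = φ t := by rw [← hcomp]; rfl
        rw [this]
        exact hφT t ht
      choose F hFsub hFmem using fun t : T => hmemJ t.1 t.2
      set S₀ : Finset (FreeAlgebra P (Fin m)) := T.attach.biUnion F with hS₀
      have hS₀S : (S₀ : Set (FreeAlgebra P (Fin m))) ⊆ S := by
        intro s hs
        simp only [hS₀, Finset.coe_biUnion, Finset.mem_coe, Finset.mem_attach,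
          Set.iUnion_true, Set.mem_iUnion] at hs
        obtain ⟨t, hts⟩ := hs
        exact hFsub t (Finset.mem_coe.mpr hts)
      have hψv : ψ v ∈ JSet P H S := by
        refine ⟨S₀, hS₀S, fun χ hχ => ?_⟩
        have hkillT : ∀ t ∈ T, (χ.comp ψ) t = 0 := by
          intro t ht
          rw [AlgHom.comp_apply]
          refine hFmem ⟨t, ht⟩ χ (fun s hs => hχ s ?_)
          simp only [hS₀, Finset.mem_coe, Finset.mem_biUnion, Finset.mem_attach]
          exact ⟨⟨t, ht⟩, True.intro, Finset.mem_coe.mp hs⟩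
        have := hHqi (χ.comp ψ) hkillT
        rwa [AlgHom.comp_apply] at this
      have : jProj P H S (ψ v) = 0 := (jProj_eq_zero_iff P H S _).mpr hψv
      calc φ v = (jProj P H S).comp ψ v := by rw [hcomp]
        _ = 0 := by rw [AlgHom.comp_apply, this]
    have hsep := hiff.mp hqa
    set π := jProj P H S with hπdef
    have hfg := range_fg' π
    have hπw : π.rangeRestrict w ≠ 0 := by
      intro h
      have h2 : π w = 0 := by simpa using congrArg Subtype.val h
      rw [jProj_eq_zero_iff] at h2
      obtain ⟨S₀, hS₀, hmem⟩ := h2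
      exact hno S₀ hS₀ hmem
    obtain ⟨χ, hχ⟩ := hsep π.range hfg (π.rangeRestrict w) 0 hπw
    have hkill : ∀ s ∈ S, (χ.comp π.rangeRestrict) s = 0 := by
      intro s hs
      have hsJ : s ∈ JSet P H S :=
        ⟨{s}, by simpa using hs, fun φ hφ => hφ s (by simp)⟩
      have h0 : π s = 0 := (jProj_eq_zero_iff P H S s).mpr hsJ
      have h1 : π.rangeRestrict s = 0 := Subtype.ext (by simpa using h0)
      simp [AlgHom.comp_apply, h1]
    have h2 := hw (χ.comp π.rangeRestrict) hkill
    rw [AlgHom.comp_apply] at h2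
    exact hχ (by rw [h2, map_zero])
end

section
/- Let H be a group that is not logically noetherian. Then there exist a type ι and an ultrafilter u on ι such that the ultrapower Filter.Germ (↑u) H (the quotient of the direct power ι → H by u-almost-everywhere equality, with its natural group structure) satisfies exactly the same quasi-identities as H, but is not geometrically equivalent to H. -/
/-- Groups `H₁` and `H₂` are geometrically equivalent: all `H₁`-closures and `H₂`-closures
coincide. -/
def GeomEquivalent (H₁ H₂ : Type*) [Group H₁] [Group H₂] : Prop :=
  ∀ (n : ℕ) (S : Set (FreeGroup (Fin n))), GClosure H₁ S = GClosure H₂ S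

/-!
Quasi-identities are preserved in both directions by reduced powers: a homomorphism from a free
group into `Germ l G` lifts to `ι → G`, finitely many relations then hold in almost every
coordinate, and `G` embeds diagonally. Geometric equivalence is not: if `w` lies in `cl_H(S)` but
in no `cl_H(S₀)` for finite `S₀ ⊆ S`, pick for each finite `T ⊆ S` a homomorphism killing `T` but
not `w`. Along an ultrafilter refining `atTop` on the finite subsets of `S`, these assemble into
one homomorphism to the ultrapower killing all of `S` but not `w`.
-/

open Filter

section ReducedPower

variable {ι G α : Type*} [Group G]

theorem Filter.Germ.coeMulHom_eq_one_iff (l : Filter ι) (f : ι → G) :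
    Germ.coeMulHom l f = 1 ↔ ∀ᶠ i in l, f i = 1 := by
  rw [← Germ.coe_one]
  exact Germ.coe_eq

theorem FreeGroup.exists_comp_coeMulHom_eq (l : Filter ι) (ψ : FreeGroup α →* Germ l G) :
    ∃ Ψ : FreeGroup α →* (ι → G), (Germ.coeMulHom l).comp Ψ = ψ := by
  choose f hf using fun a => Quotient.exists_rep (ψ (FreeGroup.of a))
  refine ⟨FreeGroup.lift f, FreeGroup.ext_hom _ _ fun a => ?_⟩
  simp only [MonoidHom.comp_apply, FreeGroup.lift_apply_of]
  exact hf a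

variable {n : ℕ} {S₀ : Finset (FreeGroup (Fin n))} {w₀ : FreeGroup (Fin n)}

theorem QuasiIdHolds.germ (l : Filter ι) (hG : QuasiIdHolds G S₀ w₀) :
    QuasiIdHolds (Germ l G) S₀ w₀ := by
  intro ψ hψ
  obtain ⟨Ψ, rfl⟩ := FreeGroup.exists_comp_coeMulHom_eq l ψ
  have hS₀ : ∀ᶠ i in l, ∀ s ∈ S₀, Ψ s i = 1 :=
    eventually_all_finset _ |>.2 fun s hs => (Germ.coeMulHom_eq_one_iff l _).1 (hψ s hs)
  refine (Germ.coeMulHom_eq_one_iff l _).2 (hS₀.mono fun i hi => ?_)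
  exact hG ((Pi.evalMonoidHom (fun _ => G) i).comp Ψ) hi

theorem QuasiIdHolds.of_germ (l : Filter ι) [l.NeBot] (hG : QuasiIdHolds (Germ l G) S₀ w₀) :
    QuasiIdHolds G S₀ w₀ := by
  intro φ hφ
  let diag : G →* Germ l G := (Germ.coeMulHom l).comp (Pi.constMonoidHom ι G)
  have hdiag : Function.Injective diag := fun _ _ h => Germ.const_inj.1 h
  exact hdiag <| by simpa using hG (diag.comp φ) fun s hs => by simp [hφ s hs]

theorem quasiIdHolds_germ_iff (l : Filter ι) [l.NeBot] :
    QuasiIdHolds (Germ l G) S₀ w₀ ↔ QuasiIdHolds G S₀ w₀ :=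
  ⟨.of_germ l, .germ l⟩

variable {S : Set (FreeGroup (Fin n))} {w : FreeGroup (Fin n)}

theorem not_mem_gClosure_germ (l : Filter ι) [l.NeBot] (φ : ι → FreeGroup (Fin n) →* G)
    (hS : ∀ s ∈ S, ∀ᶠ i in l, φ i s = 1) (hw : ∀ i, φ i w ≠ 1) :
    w ∉ GClosure (Germ l G) S := by
  intro hcl
  have hkill : ∀ s ∈ S, (Germ.coeMulHom l).comp (MonoidHom.pi φ) s = 1 := fun s hs =>
    (Germ.coeMulHom_eq_one_iff l _).2 (hS s hs)
  obtain ⟨i, hi⟩ := ((Germ.coeMulHom_eq_one_iff l _).1 (hcl _ hkill)).exists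
  exact hw i hi

end ReducedPower

theorem exists_ultrafilter_not_mem_gClosure_germ {G : Type*} [Group G] {n : ℕ}
    {S : Set (FreeGroup (Fin n))} {w : FreeGroup (Fin n)}
    (hS : ∀ S₀ : Finset (FreeGroup (Fin n)), ↑S₀ ⊆ S → w ∉ GClosure G ↑S₀) :
    ∃ u : Ultrafilter (Finset S), w ∉ GClosure (Germ (↑u : Filter (Finset S)) G) S := by
  have hT : ∀ T : Finset S, ∃ φ : FreeGroup (Fin n) →* G, (∀ s ∈ T, φ s = 1) ∧ φ w ≠ 1 := by
    intro T
    simpa [GClosure] using hS (T.map (.subtype _)) (by simp)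
  choose φ hφT hφw using hT
  refine ⟨Ultrafilter.of atTop, not_mem_gClosure_germ _ φ (fun s hs => ?_) hφw⟩
  filter_upwards [Ultrafilter.of_le atTop (eventually_ge_atTop {⟨s, hs⟩})] with T hsT
  exact hφT T ⟨s, hs⟩ (hsT (Finset.mem_singleton_self _))

/-- If `H` is not logically noetherian then some ultrapower of `H` has the same
quasi-identities as `H` but is not geometrically equivalent to `H`. -/
theorem exists_ultrapower_not_geomEquivalent (H : Type) [Group H]
    (h : ¬ LogicallyNoetherian H) :
    ∃ (ι : Type) (u : Ultrafilter ι),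
      (∀ (n : ℕ) (S₀ : Finset (FreeGroup (Fin n))) (w₀ : FreeGroup (Fin n)),
          QuasiIdHolds H S₀ w₀ ↔ QuasiIdHolds (Filter.Germ (↑u : Filter ι) H) S₀ w₀) ∧
      ¬ GeomEquivalent H (Filter.Germ (↑u : Filter ι) H) := by
  simp only [LogicallyNoetherian, not_forall, not_exists, not_and] at h
  obtain ⟨n, S, w, hw, hS⟩ := h
  obtain ⟨u, hu⟩ := exists_ultrafilter_not_mem_gClosure_germ hS
  refine ⟨Finset S, u, fun _ _ _ => (quasiIdHolds_germ_iff _).symm, fun hequiv => hu ?_⟩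
  rwa [← hequiv n S]
end

section
/- Let H₁ and H₂ be logically noetherian groups. Then H₁ and H₂ are geometrically equivalent if and only if they have the same quasi-identities, i.e., for every n, every finite subset S₀ ⊆ FreeGroup (Fin n), and every w₀ ∈ FreeGroup (Fin n), the quasi-identity (S₀, w₀) holds in H₁ if and only if it holds in H₂. -/
/-- Two logically noetherian groups are geometrically equivalent iff they have the same
quasi-identities. -/
theorem geomEquivalent_iff_same_quasiIdentities (H₁ H₂ : Type) [Group H₁] [Group H₂]
    (h₁ : LogicallyNoetherian H₁) (h₂ : LogicallyNoetherian H₂) :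
    GeomEquivalent H₁ H₂ ↔
      ∀ (n : ℕ) (S₀ : Finset (FreeGroup (Fin n))) (w₀ : FreeGroup (Fin n)),
        QuasiIdHolds H₁ S₀ w₀ ↔ QuasiIdHolds H₂ S₀ w₀ := by
  have key : ∀ (G : Type) [Group G] (n : ℕ) (S₀ : Finset (FreeGroup (Fin n)))
      (w₀ : FreeGroup (Fin n)),
      QuasiIdHolds G S₀ w₀ ↔ w₀ ∈ GClosure G (S₀ : Set (FreeGroup (Fin n))) := by
    intro G _ n S₀ w₀
    constructor
    · intro h φ hφ; exact h φ fun s hs => hφ s hs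
    · intro h φ hφ; exact h φ fun s hs => hφ s hs
  constructor
  · intro hGE n S₀ w₀
    rw [key, key, hGE n (S₀ : Set (FreeGroup (Fin n)))]
  · intro hQ n S
    ext w
    constructor
    · intro hw
      obtain ⟨S₀, hsub, hmem⟩ := h₁ n S w hw
      intro φ hφ
      exact ((key H₂ n S₀ w).mp ((hQ n S₀ w).mp ((key H₁ n S₀ w).mpr hmem))) φ
        fun s hs => hφ s (hsub hs)
    · intro hw
      obtain ⟨S₀, hsub, hmem⟩ := h₂ n S w hw
      intro φ hφ
      exact ((key H₁ n S₀ w).mp ((hQ n S₀ w).mpr ((key H₂ n S₀ w).mpr hmem))) φ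
        fun s hs => hφ s (hsub hs)
end

section
/- There exists a countable group H that is not logically noetherian; in fact, for a suitable countable group H there is an n, a subset S of FreeGroup (Fin n), and an element w ∈ cl_H(S) such that w ∉ cl_H(S₀) for every finite subset S₀ ⊆ S. -/
open Equiv Equiv.Perm
open scoped commutatorElement

instance MonoidHom.finite_range {G H : Type*} [Group G] [Group H] [Finite G] (f : G →* H) :
    Finite f.range :=
  Finite.of_surjective _ f.rangeRestrict_surjective

section LocallyFinite

variable {G : Type*} [Group G] {ι : Type*} [Nonempty ι] {K : ι → Subgroup G}

theorem Subgroup.isMulTorsion_iSup_of_directed [∀ i, Finite (K i)] (hK : Directed (· ≤ ·) K) :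
    IsMulTorsion ↥(⨆ i, K i) := fun g ↦ by
  obtain ⟨i, hi⟩ := (Subgroup.mem_iSup_of_directed hK).1 g.2
  exact (Subgroup.inclusion (le_iSup K i)).isOfFinOrder (isOfFinOrder_of_finite ⟨g, hi⟩)

theorem Subgroup.countable_iSup_of_directed [Countable ι] [∀ i, Finite (K i)]
    (hK : Directed (· ≤ ·) K) : Countable ↥(⨆ i, K i) := by
  have : (↑(⨆ i, K i) : Set G).Countable := by
    rw [Subgroup.coe_iSup_of_directed hK]
    exact Set.countable_iUnion fun i ↦ (Set.toFinite (K i : Set G)).countable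
  exact this.to_subtype

end LocallyFinite

namespace Equiv.Perm

variable {α : Type*}

theorem mem_range_ofSubtype_of_forall_apply_ne {p : α → Prop} [DecidablePred p] {f : Perm α}
    (hf : ∀ x, f x ≠ x → p x) : f ∈ (ofSubtype : Perm (Subtype p) →* Perm α).range := by
  refine ⟨f.subtypePerm fun x ↦ ?_, ofSubtype_subtypePerm _ hf⟩
  by_cases hx : f x = x
  · rw [hx]
  · exact iff_of_true (hf _ fun h ↦ hx (f.injective h)) (hf x hx)

/-- The finitary symmetric group: permutations moving only finitely many points. -/
def finitary (α : Type*) [DecidableEq α] : Subgroup (Perm α) :=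
  ⨆ s : Finset α, (ofSubtype : Perm (Subtype (· ∈ s)) →* Perm α).range

variable [DecidableEq α]

theorem mem_finitary_of_forall_apply_ne (s : Finset α) {f : Perm α}
    (hf : ∀ x, f x ≠ x → x ∈ s) : f ∈ finitary α :=
  Subgroup.mem_iSup_of_mem s (mem_range_ofSubtype_of_forall_apply_ne hf)

theorem directed_range_ofSubtype_finset :
    Directed (· ≤ ·) fun s : Finset α ↦ (ofSubtype : Perm (Subtype (· ∈ s)) →* Perm α).range := by
  intro s t
  refine ⟨s ∪ t, ?_, ?_⟩ <;>
  · rintro _ ⟨g, rfl⟩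
    refine mem_range_ofSubtype_of_forall_apply_ne fun x hx ↦ ?_
    by_contra hst
    exact hx (ofSubtype_apply_of_not_mem g fun h ↦ hst (by simp [h]))

theorem isMulTorsion_finitary : IsMulTorsion (finitary α) :=
  Subgroup.isMulTorsion_iSup_of_directed (directed_range_ofSubtype_finset (α := α))

instance [Countable α] : Countable (finitary α) :=
  Subgroup.countable_iSup_of_directed (directed_range_ofSubtype_finset (α := α))

end Equiv.Perm

def conjCommWord (j : ℕ) : FreeGroup (Fin 2) :=
  ⁅(FreeGroup.of (0 : Fin 2) ^ j)⁻¹ * FreeGroup.of 1 * FreeGroup.of 0 ^ j, FreeGroup.of 1⁆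

section Words

variable {H : Type*} [Group H]

theorem map_conjCommWord_eq_of_pow_eq (φ : FreeGroup (Fin 2) →* H) {i j : ℕ}
    (h : φ (FreeGroup.of 0) ^ i = φ (FreeGroup.of 0) ^ j) :
    φ (conjCommWord i) = φ (conjCommWord j) := by
  simp only [conjCommWord, map_commutatorElement, map_mul, map_inv, map_pow, h]

theorem conjCommWord_one_mem_gClosure (hH : IsMulTorsion H) :
    conjCommWord 1 ∈ GClosure H (conjCommWord '' {j | 2 ≤ j}) := by
  intro φ hφ
  set x := φ (FreeGroup.of 0)
  have hx : x ^ (orderOf x + 1) = x ^ 1 := by rw [pow_succ, pow_orderOf_eq_one, one_mul, pow_one]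
  rw [← map_conjCommWord_eq_of_pow_eq φ hx]
  exact hφ _ ⟨_, Nat.succ_le_succ (hH x).orderOf_pos, rfl⟩

theorem conjCommWord_one_notMem_gClosure
    (hsep : ∀ N, ∃ φ : FreeGroup (Fin 2) →* H,
      (∀ j, 2 ≤ j → j ≤ N → φ (conjCommWord j) = 1) ∧ φ (conjCommWord 1) ≠ 1)
    {S₀ : Finset (FreeGroup (Fin 2))} (hS₀ : ↑S₀ ⊆ conjCommWord '' {j | 2 ≤ j}) :
    conjCommWord 1 ∉ GClosure H (S₀ : Set (FreeGroup (Fin 2))) := by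
  choose! idx hidx using fun s (hs : s ∈ S₀) ↦ hS₀ hs
  obtain ⟨φ, hkill, hw⟩ := hsep (S₀.sup idx)
  refine fun hcl ↦ hw (hcl φ fun s hs ↦ ?_)
  rw [← (hidx s hs).2]
  exact hkill _ (hidx s hs).1 (Finset.le_sup hs)

end Words

theorem List.formPerm_range_pow_apply {k j m : ℕ} (h : m + j < k) :
    ((List.range k).formPerm ^ j) m = m + j := by
  have := (List.range k).formPerm_pow_apply_getElem List.nodup_range j m (by simp; omega)
  simpa [Nat.mod_eq_of_lt h] using this

noncomputable def cycleSwapHom (k : ℕ) : FreeGroup (Fin 2) →* Perm ℕ :=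
  FreeGroup.lift ![(List.range k).formPerm⁻¹, swap 0 1]

theorem cycleSwapHom_conjCommWord {k j : ℕ} (h : j + 1 < k) :
    cycleSwapHom k (conjCommWord j) = ⁅swap j (j + 1), swap 0 1⁆ := by
  have hconj : (List.range k).formPerm ^ j * swap 0 1 * ((List.range k).formPerm ^ j)⁻¹ =
      swap j (j + 1) := by
    rw [← swap_apply_apply, List.formPerm_range_pow_apply (m := 0) (by omega),
      List.formPerm_range_pow_apply (m := 1) (by omega), Nat.zero_add, Nat.add_comm]
  simp [cycleSwapHom, conjCommWord, map_commutatorElement, hconj]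

theorem cycleSwapHom_mem_finitary (k : ℕ) (w : FreeGroup (Fin 2)) :
    cycleSwapHom k w ∈ finitary ℕ := by
  refine FreeGroup.range_lift_le ?_ ⟨w, rfl⟩
  rintro _ ⟨i, rfl⟩
  fin_cases i
  · exact inv_mem (mem_finitary_of_forall_apply_ne (Finset.range k) fun x hx ↦ by
      simpa using List.mem_of_formPerm_apply_ne hx)
  · exact mem_finitary_of_forall_apply_ne {0, 1} fun x hx ↦ by
      by_contra h
      simp only [Finset.mem_insert, Finset.mem_singleton, not_or] at h
      exact hx (swap_apply_of_ne_of_ne h.1 h.2)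

theorem commutatorElement_swap_swap_eq_one {α : Type*} [DecidableEq α] {a b c d : α}
    (h : [a, b, c, d].Nodup) :
    ⁅swap a b, swap c d⁆ = 1 :=
  commutatorElement_eq_one_iff_commute.2 (disjoint_swap_swap h).commute

theorem commutatorElement_swap_one_two_swap_zero_one_ne_one :
    ⁅swap 1 2, swap 0 1⁆ ≠ (1 : Perm ℕ) := by
  intro h
  have := congrArg (· 0) h
  simp [commutatorElement_def, swap_apply_of_ne_of_ne] at this

theorem exists_hom_finitary_separating_conjCommWord (N : ℕ) :
    ∃ φ : FreeGroup (Fin 2) →* finitary ℕ,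
      (∀ j, 2 ≤ j → j ≤ N → φ (conjCommWord j) = 1) ∧ φ (conjCommWord 1) ≠ 1 := by
  refine ⟨(cycleSwapHom (N + 3)).codRestrict _ (cycleSwapHom_mem_finitary _), fun j hj hjN ↦ ?_, ?_⟩
  · rw [← OneMemClass.coe_eq_one]
    change cycleSwapHom _ _ = 1
    rw [cycleSwapHom_conjCommWord (by omega)]
    exact commutatorElement_swap_swap_eq_one (by simp; omega)
  · rw [Ne, ← OneMemClass.coe_eq_one]
    change cycleSwapHom _ _ ≠ 1
    rw [cycleSwapHom_conjCommWord (by omega)]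
    exact commutatorElement_swap_one_two_swap_zero_one_ne_one

/-- There is a countable group `H` that is not logically noetherian: for some `n`,
some `S ⊆ FreeGroup (Fin n)` and some `w ∈ cl_H(S)`, no finite subset `S₀ ⊆ S`
satisfies `w ∈ cl_H(S₀)`. -/
theorem exists_countable_group_not_logicallyNoetherian :
    ∃ (H : Type) (instH : Group H), Countable H ∧
      ∃ (n : ℕ) (S : Set (FreeGroup (Fin n))) (w : FreeGroup (Fin n)),
        w ∈ @GClosure H instH n S ∧
          ∀ S₀ : Finset (FreeGroup (Fin n)), ↑S₀ ⊆ S →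
            w ∉ @GClosure H instH n (S₀ : Set (FreeGroup (Fin n))) :=
  ⟨finitary ℕ, inferInstance, inferInstance, 2, conjCommWord '' {j | 2 ≤ j}, conjCommWord 1,
    conjCommWord_one_mem_gClosure isMulTorsion_finitary,
    fun _ ↦ conjCommWord_one_notMem_gClosure exists_hom_finitary_separating_conjCommWord⟩
end

section
/- Let P be a countable field. Then there exists a countable associative unital P-algebra H that is not logically noetherian; that is, there are an n, a subset S of FreeAlgebra P (Fin n), and an element w ∈ cl_H(S) such that w ∉ cl_H(S₀) for every finite subset S₀ ⊆ S. -/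
theorem aClosure_mono {P H : Type*} [CommSemiring P] [Semiring H] [Algebra P H] {n : ℕ}
    {S T : Set (FreeAlgebra P (Fin n))} (h : S ⊆ T) :
    AClosure P H S ⊆ AClosure P H T :=
  fun _ hw φ hφ => hw φ fun s hs => hφ s (h hs)

theorem Finset.exists_subset_image_Iio_of_subset_range {β : Type*} {f : ℕ → β} {s : Finset β}
    (h : ↑s ⊆ Set.range f) : ∃ n, ↑s ⊆ f '' Set.Iio n := by
  classical
  obtain ⟨t, -, rfl⟩ := Finset.subset_set_image_iff.mp (Set.image_univ (f := f) ▸ h)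
  obtain ⟨n, hn⟩ := t.exists_nat_subset_range
  refine ⟨n, ?_⟩
  rw [Finset.coe_image]
  exact Set.image_mono fun k hk => by simpa using hn hk

theorem Submodule.countable_span {R M : Type*} [Semiring R] [AddCommMonoid M] [Module R M]
    [Countable R] {s : Set M} (hs : s.Countable) : Countable (span R s) := by
  have := hs.to_subtype
  rw [← Subtype.range_coe (s := s), ← Finsupp.range_linearCombination]
  exact (Set.countable_range _).to_subtype

namespace NotLogicallyNoetherian

section FreeAlgebra

variable {P : Type*} [CommRing P] {H : Type*} [Ring H] [Algebra P H]

variable (P) in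
noncomputable def sandwich (k : ℕ) : FreeAlgebra P (Fin 4) :=
  FreeAlgebra.ι P 0 *
    (FreeAlgebra.ι P 1 * FreeAlgebra.ι P 2 - FreeAlgebra.ι P 2 * FreeAlgebra.ι P 1) ^ k *
      FreeAlgebra.ι P 3

variable (P) in
noncomputable def sandwichStep (k : ℕ) : FreeAlgebra P (Fin 4) :=
  sandwich P k - sandwich P (k + 1)

theorem map_sandwich (φ : FreeAlgebra P (Fin 4) →ₐ[P] H) (k : ℕ) :
    φ (sandwich P k) = φ (FreeAlgebra.ι P 0) *
      (φ (FreeAlgebra.ι P 1) * φ (FreeAlgebra.ι P 2) -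
        φ (FreeAlgebra.ι P 2) * φ (FreeAlgebra.ι P 1)) ^ k * φ (FreeAlgebra.ι P 3) := by
  simp only [sandwich, map_mul, map_pow, map_sub]

theorem sandwich_zero_mem_aClosure (hH : ∀ x y : H, IsNilpotent (x * y - y * x)) :
    sandwich P 0 ∈ AClosure P H (Set.range (sandwichStep P)) := by
  intro φ hφ
  have hstep (k : ℕ) : φ (sandwich P k) = φ (sandwich P (k + 1)) :=
    sub_eq_zero.mp (by simpa [sandwichStep] using hφ _ ⟨k, rfl⟩)
  have htele (k : ℕ) : φ (sandwich P 0) = φ (sandwich P k) := by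
    induction k with
    | zero => rfl
    | succ k ih => rw [ih, hstep]
  obtain ⟨M, hM⟩ := hH (φ (FreeAlgebra.ι P 1)) (φ (FreeAlgebra.ι P 2))
  rw [htele M, map_sandwich, hM, mul_zero, zero_mul]

theorem sandwich_zero_notMem_aClosure {n : ℕ} {x c d z e : H}
    (hsandwich : ∀ k ≤ n, x * (c * d - d * c) ^ k * z = e) (he : e ≠ 0) :
    sandwich P 0 ∉ AClosure P H (sandwichStep P '' Set.Iio n) := by
  let φ : FreeAlgebra P (Fin 4) →ₐ[P] H := FreeAlgebra.lift P ![x, c, d, z]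
  have hφ (k : ℕ) (hk : k ≤ n) : φ (sandwich P k) = e := by
    simpa [φ, map_sandwich] using hsandwich k hk
  intro hw
  refine he ?_
  rw [← hφ 0 (Nat.zero_le n)]
  refine hw φ ?_
  rintro _ ⟨k, hk, rfl⟩
  rw [sandwichStep, map_sub, hφ k (le_of_lt hk), hφ (k + 1) hk, sub_self]

end FreeAlgebra

section MatrixUnits

variable (P : Type*) [CommRing P]

noncomputable def matrixUnit (i j : ℕ) : Module.End P (ℕ → P) :=
  LinearMap.single P (fun _ => P) i ∘ₗ LinearMap.proj j

variable {P}

theorem matrixUnit_mul_matrixUnit (i j k l : ℕ) :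
    matrixUnit P i j * matrixUnit P k l = if j = k then matrixUnit P i l else 0 := by
  ext f : 1
  by_cases hjk : j = k <;> simp [matrixUnit, hjk]

theorem matrixUnit_ne_zero [Nontrivial P] (i j : ℕ) : matrixUnit P i j ≠ 0 := by
  intro h
  simpa [matrixUnit] using congr($h (Pi.single j 1) i)

theorem matrixUnit_mul_sum {ι : Type*} (s : Finset ι) (p q : ι → ℕ) (i j : ℕ) :
    matrixUnit P i j * ∑ l ∈ s, matrixUnit P (p l) (q l) =
      ∑ l ∈ s, if j = p l then matrixUnit P i (q l) else 0 := by
  simp only [Finset.mul_sum, matrixUnit_mul_matrixUnit]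

end MatrixUnits

section StrictlyUpper

variable (P : Type*) [CommRing P]

noncomputable def strictlyUpper : Submodule P (Module.End P (ℕ → P)) :=
  Submodule.span P {f | ∃ i j, i < j ∧ matrixUnit P i j = f}

noncomputable def band (R s : ℕ) : Submodule P (Module.End P (ℕ → P)) :=
  Submodule.span P {f | ∃ i j, i + s ≤ j ∧ j ≤ R ∧ matrixUnit P i j = f}

variable {P}

theorem matrixUnit_mem_strictlyUpper {i j : ℕ} (h : i < j) : matrixUnit P i j ∈ strictlyUpper P :=
  Submodule.subset_span ⟨i, j, h, rfl⟩

theorem strictlyUpper_mul_le : strictlyUpper P * strictlyUpper P ≤ strictlyUpper P := by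
  rw [strictlyUpper, Submodule.span_mul_span, Submodule.span_le]
  rintro _ ⟨_, ⟨i, j, hij, rfl⟩, _, ⟨k, l, hkl, rfl⟩, rfl⟩
  simp only [matrixUnit_mul_matrixUnit]
  split_ifs with hjk
  · exact matrixUnit_mem_strictlyUpper (hjk ▸ hij |>.trans hkl)
  · exact zero_mem _

theorem band_mul_le (R s t : ℕ) : band P R s * band P R t ≤ band P R (s + t) := by
  rw [band, band, Submodule.span_mul_span, Submodule.span_le]
  rintro _ ⟨_, ⟨i, j, hij, -, rfl⟩, _, ⟨k, l, hkl, hlR, rfl⟩, rfl⟩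
  simp only [matrixUnit_mul_matrixUnit]
  split_ifs with hjk
  · exact Submodule.subset_span ⟨i, l, by omega, hlR, rfl⟩
  · exact zero_mem _

theorem band_eq_bot (R : ℕ) : band P R (R + 1) = ⊥ := by
  rw [band, Submodule.span_eq_bot]
  rintro _ ⟨i, j, hij, hjR, rfl⟩
  omega

theorem pow_succ_mem_band {R : ℕ} {f : Module.End P (ℕ → P)} (hf : f ∈ band P R 1) (k : ℕ) :
    f ^ (k + 1) ∈ band P R (k + 1) := by
  induction k with
  | zero => simpa using hf
  | succ k ih => exact pow_succ f (k + 1) ▸ band_mul_le R (k + 1) 1 (Submodule.mul_mem_mul ih hf)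

theorem band_mono {R R' : ℕ} (h : R ≤ R') (s : ℕ) : band P R s ≤ band P R' s :=
  Submodule.span_mono fun _ ⟨i, j, hij, hjR, hf⟩ => ⟨i, j, hij, hjR.trans h, hf⟩

theorem exists_mem_band_of_mem_strictlyUpper {f : Module.End P (ℕ → P)}
    (hf : f ∈ strictlyUpper P) : ∃ R, f ∈ band P R 1 := by
  induction hf using Submodule.span_induction with
  | mem f hf =>
    obtain ⟨i, j, hij, rfl⟩ := hf
    exact ⟨j, Submodule.subset_span ⟨i, j, hij, le_rfl, rfl⟩⟩
  | zero => exact ⟨0, zero_mem _⟩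
  | add f g _ _ hf hg =>
    obtain ⟨R, hR⟩ := hf
    obtain ⟨R', hR'⟩ := hg
    exact ⟨max R R', add_mem (band_mono (le_max_left R R') 1 hR)
      (band_mono (le_max_right R R') 1 hR')⟩
  | smul r f _ hf =>
    obtain ⟨R, hR⟩ := hf
    exact ⟨R, Submodule.smul_mem _ r hR⟩

theorem isNilpotent_of_mem_strictlyUpper {f : Module.End P (ℕ → P)}
    (hf : f ∈ strictlyUpper P) : IsNilpotent f := by
  obtain ⟨R, hR⟩ := exists_mem_band_of_mem_strictlyUpper hf
  refine ⟨R + 1, ?_⟩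
  simpa [band_eq_bot] using pow_succ_mem_band hR R

theorem mul_le_one_sup_strictlyUpper :
    (1 ⊔ strictlyUpper P) * (1 ⊔ strictlyUpper P) ≤ 1 ⊔ strictlyUpper P := by
  rw [Submodule.mul_sup, Submodule.sup_mul, Submodule.sup_mul, one_mul, one_mul, mul_one]
  exact sup_le le_rfl (sup_le le_sup_right (le_sup_of_le_right strictlyUpper_mul_le))

variable (P)

noncomputable def scalarAddStrictlyUpper : Subalgebra P (Module.End P (ℕ → P)) :=
  (1 ⊔ strictlyUpper P).toSubalgebra (Submodule.mem_sup_left (Submodule.one_le.mp le_rfl))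
    fun _ _ hf hg => mul_le_one_sup_strictlyUpper (Submodule.mul_mem_mul hf hg)

variable {P}

theorem isNilpotent_commutator_scalarAddStrictlyUpper (f g : scalarAddStrictlyUpper P) :
    IsNilpotent (f * g - g * f) := by
  obtain ⟨_, hr, f', hf', hf⟩ := Submodule.mem_sup.mp f.2
  obtain ⟨_, hs, g', hg', hg⟩ := Submodule.mem_sup.mp g.2
  obtain ⟨r, rfl⟩ := Submodule.mem_one.mp hr
  obtain ⟨s, rfl⟩ := Submodule.mem_one.mp hs
  have hcomm : (f * g - g * f : Module.End P (ℕ → P)) = f' * g' - g' * f' := by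
    simp only [← hf, ← hg, add_mul, mul_add]
    rw [Algebra.commutes r g', Algebra.commutes s f', Algebra.commutes r]
    abel
  obtain ⟨k, hk⟩ := hcomm ▸ isNilpotent_of_mem_strictlyUpper (sub_mem
    (strictlyUpper_mul_le (Submodule.mul_mem_mul hf' hg'))
    (strictlyUpper_mul_le (Submodule.mul_mem_mul hg' hf')))
  exact ⟨k, Subtype.ext (by simpa using hk)⟩

theorem countable_scalarAddStrictlyUpper [Countable P] : Countable (scalarAddStrictlyUpper P) := by
  have hunits : {f | ∃ i j, i < j ∧ matrixUnit P i j = f}.Countable := by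
    refine (Set.countable_range fun p : ℕ × ℕ => matrixUnit P p.1 p.2).mono ?_
    rintro _ ⟨i, j, -, rfl⟩
    exact ⟨(i, j), rfl⟩
  have hspan : Countable ↥(1 ⊔ strictlyUpper P : Submodule P (Module.End P (ℕ → P))) := by
    rw [Submodule.one_eq_span, strictlyUpper, ← Submodule.span_insert]
    exact Submodule.countable_span (hunits.insert 1)
  exact hspan

end StrictlyUpper

section Witness

variable {P : Type*} [CommRing P]

variable (P) in
noncomputable def oddStep (L : ℕ) : Module.End P (ℕ → P) :=
  ∑ i ∈ Finset.range L, matrixUnit P (2 * i + 1) (2 * i + 2)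

variable (P) in
noncomputable def evenStep (L : ℕ) : Module.End P (ℕ → P) :=
  ∑ i ∈ Finset.range L, matrixUnit P (2 * i + 2) (2 * i + 3)

variable (P) in
noncomputable def collector (L : ℕ) : Module.End P (ℕ → P) :=
  ∑ l ∈ Finset.range (L + 1), matrixUnit P (2 * l + 1) (2 * L + 2)

/-- `oddStep` moves column `2 i + 1` to `2 i + 2` and `evenStep` then moves it to `2 i + 3`;
`evenStep` kills odd columns, so `evenStep * oddStep` contributes nothing. -/
theorem matrixUnit_mul_commutator {L i : ℕ} (hi : i < L) (r : ℕ) :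
    matrixUnit P r (2 * i + 1) * (oddStep P L * evenStep P L - evenStep P L * oddStep P L) =
      matrixUnit P r (2 * i + 3) := by
  have hodd : matrixUnit P r (2 * i + 1) * oddStep P L = matrixUnit P r (2 * i + 2) := by
    simp [oddStep, matrixUnit_mul_sum, hi]
  have heven : matrixUnit P r (2 * i + 2) * evenStep P L = matrixUnit P r (2 * i + 3) := by
    simp [evenStep, matrixUnit_mul_sum, hi]
  have hzero : matrixUnit P r (2 * i + 1) * evenStep P L = 0 := by
    simp only [evenStep, matrixUnit_mul_sum]
    exact Finset.sum_eq_zero fun l _ => if_neg (by omega)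
  rw [mul_sub, ← mul_assoc, ← mul_assoc, hodd, heven, hzero, zero_mul, sub_zero]

theorem matrixUnit_mul_commutator_pow {L k : ℕ} (hk : k ≤ L) (r : ℕ) :
    matrixUnit P r 1 * (oddStep P L * evenStep P L - evenStep P L * oddStep P L) ^ k =
      matrixUnit P r (2 * k + 1) := by
  induction k with
  | zero => simp
  | succ k ih =>
    rw [pow_succ, ← mul_assoc, ih (by omega), matrixUnit_mul_commutator (by omega)]
    rfl

theorem matrixUnit_mul_collector {L k : ℕ} (hk : k ≤ L) (r : ℕ) :
    matrixUnit P r (2 * k + 1) * collector P L = matrixUnit P r (2 * L + 2) := by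
  simp [collector, matrixUnit_mul_sum, Nat.lt_succ_of_le hk]

theorem exists_sandwich_eq_ne_zero [Nontrivial P] (L : ℕ) :
    ∃ x c d z e : scalarAddStrictlyUpper P,
      (∀ k ≤ L, x * (c * d - d * c) ^ k * z = e) ∧ e ≠ 0 := by
  have hmem {f} (hf : f ∈ strictlyUpper P) : f ∈ scalarAddStrictlyUpper P :=
    Submodule.mem_sup_right hf
  have hsum {s : Finset ℕ} {p q : ℕ → ℕ} (hpq : ∀ l ∈ s, p l < q l) :
      ∑ l ∈ s, matrixUnit P (p l) (q l) ∈ scalarAddStrictlyUpper P :=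
    hmem (sum_mem fun l hl => matrixUnit_mem_strictlyUpper (hpq l hl))
  refine ⟨⟨matrixUnit P 0 1, hmem (matrixUnit_mem_strictlyUpper one_pos)⟩,
    ⟨oddStep P L, hsum fun _ _ => by omega⟩, ⟨evenStep P L, hsum fun _ _ => by omega⟩,
    ⟨collector P L, hsum fun l hl => by simp at hl; omega⟩,
    ⟨matrixUnit P 0 (2 * L + 2), hmem (matrixUnit_mem_strictlyUpper (by omega))⟩,
    fun k hk => Subtype.ext ?_, fun h => matrixUnit_ne_zero 0 (2 * L + 2) congr(($h).val)⟩
  simp only [Subalgebra.coe_mul, Subalgebra.coe_pow, Subalgebra.coe_sub]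
  rw [matrixUnit_mul_commutator_pow hk, matrixUnit_mul_collector hk]

end Witness

end NotLogicallyNoetherian

/-- Over a countable field `P` there is a countable associative unital `P`-algebra `H` that
is not logically noetherian: for some `n`, some `S ⊆ FreeAlgebra P (Fin n)` and some
`w ∈ cl_H(S)`, no finite subset `S₀ ⊆ S` satisfies `w ∈ cl_H(S₀)`. -/
theorem exists_countable_algebra_not_logicallyNoetherian (P : Type) [Field P] [Countable P] :
    ∃ (H : Type) (instH : Ring H) (instA : @Algebra P H inferInstance instH.toSemiring),
      Countable H ∧
      ∃ (n : ℕ) (S : Set (FreeAlgebra P (Fin n))) (w : FreeAlgebra P (Fin n)),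
        w ∈ @AClosure P _ H instH.toSemiring instA n S ∧
          ∀ S₀ : Finset (FreeAlgebra P (Fin n)), ↑S₀ ⊆ S →
            w ∉ @AClosure P _ H instH.toSemiring instA n (S₀ : Set (FreeAlgebra P (Fin n))) := by
  open NotLogicallyNoetherian in
  refine ⟨scalarAddStrictlyUpper P, inferInstance, inferInstance, countable_scalarAddStrictlyUpper,
    4, Set.range (sandwichStep P), sandwich P 0,
    sandwich_zero_mem_aClosure isNilpotent_commutator_scalarAddStrictlyUpper, fun S₀ hS₀ => ?_⟩
  obtain ⟨n, hn⟩ := Finset.exists_subset_image_Iio_of_subset_range hS₀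
  obtain ⟨x, c, d, z, e, hsandwich, he⟩ := exists_sandwich_eq_ne_zero (P := P) n
  exact fun hw => sandwich_zero_notMem_aClosure hsandwich he (aClosure_mono hn hw)
end

section
/- Groups H₁ and H₂ are geometrically equivalent if and only if LSC(H₁) = LSC(H₂), i.e., if and only if for every group G the following two conditions on G are equivalent: (a) for every finitely generated subgroup K of G, homomorphisms into H₁ separate the points of K; (b) for every finitely generated subgroup K of G, homomorphisms into H₂ separate the points of K. -/
/-! For a surjection `π : F_n → K`, homomorphisms into `H` separate the points of `K` exactly
when `ker π` is closed for the closure operator `S ↦ cl_H(S)`. Every `cl_H`-closed set is a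
normal subgroup `N`, the kernel of `F_n → F_n ⧸ N`, so `cl_{H₁}` and `cl_{H₂}` have the same closed
sets, and hence coincide, iff `H₁` and `H₂` separate the points of the same finitely generated
groups. A finitely generated group is `H`-separated iff all its finitely generated subgroups
are, which turns this into `LSC(H₁) = LSC(H₂)`. -/

variable {H : Type*} [Group H]

theorem separatesPoints_iff_forall_ne_one {K : Type*} [Group K] :
    SeparatesPoints H K ↔ ∀ a : K, a ≠ 1 → ∃ φ : K →* H, φ a ≠ 1 := by
  refine ⟨fun h a ha => by simpa using h a 1 ha, fun h a b hab => ?_⟩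
  obtain ⟨φ, hφ⟩ := h (a * b⁻¹) (mul_inv_eq_one.not.mpr hab)
  exact ⟨φ, by simpa [mul_inv_eq_one] using hφ⟩

theorem SeparatesPoints.of_injective {K L : Type*} [Group K] [Group L] (h : SeparatesPoints H L)
    {f : K →* L} (hf : Function.Injective f) : SeparatesPoints H K := fun a b hab =>
  let ⟨φ, hφ⟩ := h (f a) (f b) (hf.ne hab)
  ⟨φ.comp f, hφ⟩

theorem separatesPoints_iff_forall_fg_subgroup {G : Type*} [Group G] [Group.FG G] :
    SeparatesPoints H G ↔ ∀ K : Subgroup G, K.FG → SeparatesPoints H K :=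
  ⟨fun h K _ => h.of_injective K.subtype_injective,
    fun h => (h ⊤ (Group.fg_def.mp inferInstance)).of_injective
      (f := (Subgroup.topEquiv (G := G)).symm.toMonoidHom) (MulEquiv.injective _)⟩

theorem Group.exists_freeGroup_fin_surjective (K : Type*) [Group K] [Group.FG K] :
    ∃ (n : ℕ) (π : FreeGroup (Fin n) →* K), Function.Surjective π := by
  obtain ⟨S, hS, π, hπ⟩ := Group.fg_iff_exists_freeGroup_hom_surjective.mp ‹_›
  obtain ⟨n, ⟨e⟩⟩ := hS.exists_equiv_fin S
  exact ⟨n, π.comp (FreeGroup.freeGroupCongr e).symm.toMonoidHom,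
    hπ.comp (FreeGroup.freeGroupCongr e).symm.surjective⟩

section GClosure

variable (H) {n : ℕ}

theorem subset_gClosure (S : Set (FreeGroup (Fin n))) : S ⊆ GClosure H S :=
  fun s hs _ hφ => hφ s hs

theorem gClosure_subset_gClosure {S T : Set (FreeGroup (Fin n))} (h : S ⊆ GClosure H T) :
    GClosure H S ⊆ GClosure H T :=
  fun _ hw φ hφ => hw φ fun _ hs => h hs φ hφ

def gClosureOperator (n : ℕ) : ClosureOperator (Set (FreeGroup (Fin n))) :=
  .mk₂ (GClosure H) (subset_gClosure H) fun _ _ => gClosure_subset_gClosure H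

def gClosureSubgroup (S : Set (FreeGroup (Fin n))) : Subgroup (FreeGroup (Fin n)) :=
  ⨅ φ : {φ : FreeGroup (Fin n) →* H // ∀ s ∈ S, φ s = 1}, φ.1.ker

instance (S : Set (FreeGroup (Fin n))) : (gClosureSubgroup H S).Normal :=
  Subgroup.normal_iInf_normal fun φ => φ.1.normal_ker

theorem coe_gClosureSubgroup (S : Set (FreeGroup (Fin n))) :
    (gClosureSubgroup H S : Set (FreeGroup (Fin n))) = GClosure H S := by
  ext w
  simp [gClosureSubgroup, GClosure]

theorem separatesPoints_iff_gClosure_ker_subset {K : Type*} [Group K]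
    {π : FreeGroup (Fin n) →* K} (hπ : Function.Surjective π) :
    SeparatesPoints H K ↔ GClosure H (π.ker : Set (FreeGroup (Fin n))) ⊆ π.ker := by
  rw [separatesPoints_iff_forall_ne_one]
  constructor
  · intro h w hw
    by_contra hwπ
    obtain ⟨ψ, hψ⟩ := h (π w) hwπ
    exact hψ (hw (ψ.comp π) fun s hs => by simp [MonoidHom.mem_ker.mp hs])
  · intro h a ha
    obtain ⟨w, rfl⟩ := hπ a
    have hw : w ∉ GClosure H (π.ker : Set (FreeGroup (Fin n))) := fun hw => ha (h hw)
    simp only [GClosure, Set.mem_ofPred_eq, not_forall] at hw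
    obtain ⟨φ, hφ, hφw⟩ := hw
    exact ⟨π.liftOfSurjective hπ ⟨φ, hφ⟩, by simpa using hφw⟩

theorem separatesPoints_quotient_iff_isClosed (N : Subgroup (FreeGroup (Fin n))) [N.Normal] :
    SeparatesPoints H (FreeGroup (Fin n) ⧸ N) ↔ (gClosureOperator H n).IsClosed N := by
  rw [separatesPoints_iff_gClosure_ker_subset H (QuotientGroup.mk'_surjective N),
    QuotientGroup.ker_mk', ClosureOperator.isClosed_iff_closure_le]
  rfl

end GClosure

variable {H₁ H₂ : Type*} [Group H₁] [Group H₂]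

theorem GeomEquivalent.separatesPoints_iff (h : GeomEquivalent H₁ H₂) (K : Type*) [Group K]
    [Group.FG K] : SeparatesPoints H₁ K ↔ SeparatesPoints H₂ K := by
  obtain ⟨n, π, hπ⟩ := Group.exists_freeGroup_fin_surjective K
  rw [separatesPoints_iff_gClosure_ker_subset H₁ hπ, separatesPoints_iff_gClosure_ker_subset H₂ hπ,
    h]

theorem isClosed_gClosureOperator_of_separatesPoints_imp
    (h : ∀ (K : Type) [Group K] [Group.FG K], SeparatesPoints H₁ K → SeparatesPoints H₂ K)
    {n : ℕ} {S : Set (FreeGroup (Fin n))} (hS : (gClosureOperator H₁ n).IsClosed S) :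
    (gClosureOperator H₂ n).IsClosed S := by
  have hN : (gClosureSubgroup H₁ S : Set (FreeGroup (Fin n))) = S :=
    (coe_gClosureSubgroup H₁ S).trans hS.closure_eq
  rw [← hN, ← separatesPoints_quotient_iff_isClosed] at hS ⊢
  exact h _ hS

theorem geomEquivalent_iff_forall_fg_separatesPoints_iff :
    GeomEquivalent H₁ H₂ ↔
      ∀ (K : Type) [Group K] [Group.FG K], SeparatesPoints H₁ K ↔ SeparatesPoints H₂ K := by
  refine ⟨fun h K _ _ => h.separatesPoints_iff K, fun h n S => ?_⟩
  have hc : gClosureOperator H₁ n = gClosureOperator H₂ n :=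
    ClosureOperator.ext_isClosed _ _ fun S =>
      ⟨isClosed_gClosureOperator_of_separatesPoints_imp fun K _ _ => (h K).mp,
        isClosed_gClosureOperator_of_separatesPoints_imp fun K _ _ => (h K).mpr⟩
  exact congrArg (· S) hc

/-- `H₁` and `H₂` are geometrically equivalent iff `LSC(H₁) = LSC(H₂)`: for every group `G`,
all finitely generated subgroups of `G` have their points separated by homomorphisms into
`H₁` iff the same holds with `H₂`. -/
theorem geomEquivalent_iff_lsc_eq (H₁ H₂ : Type) [Group H₁] [Group H₂] :
    GeomEquivalent H₁ H₂ ↔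
      ∀ (G : Type) [Group G],
        ((∀ K : Subgroup G, K.FG → SeparatesPoints H₁ K) ↔
          (∀ K : Subgroup G, K.FG → SeparatesPoints H₂ K)) := by
  rw [geomEquivalent_iff_forall_fg_separatesPoints_iff]
  constructor
  · intro h G _
    refine forall_congr' fun K => forall_congr' fun hK => ?_
    have := (Group.fg_iff_subgroup_fg K).mpr hK
    exact h K
  · intro h K _ _
    simpa only [← separatesPoints_iff_forall_fg_subgroup] using h K
end

section
/- Let H be a group. Then H is logically noetherian if and only if for every n, the union of any nonempty family of H-closed normal subgroups of FreeGroup (Fin n) that is directed by inclusion is again an H-closed normal subgroup (that is, the set-theoretic union of the family equals its own H-closure). -/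
lemma subset_gclosure (H : Type*) [Group H] {n : ℕ} (S : Set (FreeGroup (Fin n))) :
    S ⊆ GClosure H S := fun s hs φ hφ => hφ s hs

lemma gclosure_mono (H : Type*) [Group H] {n : ℕ} {S T : Set (FreeGroup (Fin n))}
    (h : S ⊆ T) : GClosure H S ⊆ GClosure H T :=
  fun w hw φ hφ => hw φ (fun s hs => hφ s (h hs))

lemma gclosure_idem (H : Type*) [Group H] {n : ℕ} (S : Set (FreeGroup (Fin n))) :
    GClosure H (GClosure H S) = GClosure H S := by
  apply subset_antisymm
  · intro w hw φ hφ
    exact hw φ (fun s hs => hs φ hφ)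
  · exact subset_gclosure H _

/-- The `H`-closure as a subgroup. -/
def gclosureSubgroup (H : Type*) [Group H] {n : ℕ} (S : Set (FreeGroup (Fin n))) :
    Subgroup (FreeGroup (Fin n)) where
  carrier := GClosure H S
  one_mem' := fun φ _ => map_one φ
  mul_mem' := fun ha hb φ hφ => by rw [map_mul, ha φ hφ, hb φ hφ, one_mul]
  inv_mem' := fun ha φ hφ => by rw [map_inv, ha φ hφ, inv_one]

lemma gclosureSubgroup_normal (H : Type*) [Group H] {n : ℕ}
    (S : Set (FreeGroup (Fin n))) : (gclosureSubgroup H S).Normal := by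
  constructor
  intro g hg h φ hφ
  have : φ g = 1 := hg φ hφ
  simp [map_mul, this]

/-- `H` is logically noetherian iff for every `n` the union of any nonempty
inclusion-directed family of `H`-closed normal subgroups of `FreeGroup (Fin n)` is again
`H`-closed. -/
theorem logicallyNoetherian_iff_directed_union_closed (H : Type) [Group H] :
    LogicallyNoetherian H ↔
      ∀ (n : ℕ) (ι : Type) (N : ι → Subgroup (FreeGroup (Fin n))),
        Nonempty ι →
        (∀ i, (N i).Normal) →
        (∀ i, ((N i : Set (FreeGroup (Fin n))) = GClosure H (N i : Set (FreeGroup (Fin n))))) →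
        (∀ i j, ∃ k, N i ≤ N k ∧ N j ≤ N k) →
        (⋃ i, (N i : Set (FreeGroup (Fin n)))) =
          GClosure H (⋃ i, (N i : Set (FreeGroup (Fin n)))) := by
  constructor
  · intro hLN n ι N hne _ hclosed hdir
    apply subset_antisymm (subset_gclosure H _)
    intro w hw
    obtain ⟨S₀, hS₀, hw₀⟩ := hLN n _ w hw
    -- find a single k containing all of S₀
    have key : ∀ F : Finset (FreeGroup (Fin n)),
        (↑F : Set (FreeGroup (Fin n))) ⊆ (⋃ i, (N i : Set (FreeGroup (Fin n)))) →
        ∃ k, (↑F : Set (FreeGroup (Fin n))) ⊆ (N k : Set (FreeGroup (Fin n))) := by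
      intro F
      induction F using Finset.induction_on with
      | empty => intro _; exact ⟨hne.some, by simp⟩
      | @insert a F _ ih =>
          intro hsub
          obtain ⟨j, hj⟩ := ih (fun x hx => hsub (by simp [hx]))
          have ha : a ∈ ⋃ i, (N i : Set (FreeGroup (Fin n))) := hsub (by simp)
          obtain ⟨i, hi⟩ := Set.mem_iUnion.mp ha
          obtain ⟨k, hik, hjk⟩ := hdir i j
          refine ⟨k, ?_⟩
          intro x hx
          rcases Finset.mem_insert.mp (by exact_mod_cast hx) with rfl | hxF
          · exact hik hi
          · exact hjk (hj hxF)
    obtain ⟨k, hk⟩ := key S₀ hS₀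
    have : w ∈ GClosure H (N k : Set (FreeGroup (Fin n))) :=
      gclosure_mono H hk hw₀
    rw [← hclosed k] at this
    exact Set.mem_iUnion.mpr ⟨k, this⟩
  · intro h n S w hw
    set ι := {F : Finset (FreeGroup (Fin n)) // (↑F : Set (FreeGroup (Fin n))) ⊆ S} with hι
    set N : ι → Subgroup (FreeGroup (Fin n)) := fun F => gclosureSubgroup H (↑F.1) with hN
    have hunion := h n ι N ⟨⟨∅, by simp⟩⟩ (fun i => gclosureSubgroup_normal H _)
      (fun i => (gclosure_idem H _).symm)
      (fun i j => by
        refine ⟨⟨i.1 ∪ j.1, ?_⟩, ?_, ?_⟩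
        · intro x hx
          rcases Finset.mem_union.mp (by exact_mod_cast hx) with h' | h'
          · exact i.2 h'
          · exact j.2 h'
        · exact gclosure_mono H (by intro x hx; exact_mod_cast Finset.mem_union_left _ (by exact_mod_cast hx))
        · exact gclosure_mono H (by intro x hx; exact_mod_cast Finset.mem_union_right _ (by exact_mod_cast hx)))
    have hS : S ⊆ ⋃ i, (N i : Set (FreeGroup (Fin n))) := by
      intro s hs
      refine Set.mem_iUnion.mpr ⟨⟨{s}, by simpa using hs⟩, ?_⟩
      exact subset_gclosure H _ (by simp)
    have : w ∈ GClosure H (⋃ i, (N i : Set (FreeGroup (Fin n)))) :=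
      gclosure_mono H hS hw
    rw [← hunion] at this
    obtain ⟨F, hF⟩ := Set.mem_iUnion.mp this
    exact ⟨F.1, F.2, hF⟩
end

section
/- There exists a group H that is logically noetherian but not geometrically noetherian. (Geometrical noetherianity always implies logical noetherianity, but the converse fails for groups.) -/
/-- A group `H` is geometrically noetherian. -/
def GeometricallyNoetherian (H : Type*) [Group H] : Prop :=
  ∀ (n : ℕ) (S : Set (FreeGroup (Fin n))),
    ∃ S₀ : Finset (FreeGroup (Fin n)), ↑S₀ ⊆ S ∧
      GClosure H (S₀ : Set (FreeGroup (Fin n))) = GClosure H S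

/-!
Take for `H` the product of all groups `⟨x₁, …, xₙ | S⟩`. The factor indexed by `(n, S)` is a
subgroup of `H`, so a word vanishing under every homomorphism to `H` that kills `S` lies in the
normal closure of `S`; hence the `H`-closure of `S` is its normal closure. Logical noetherianity
is then the finiteness of group words: an element of a normal closure is a product of finitely
many conjugates of relators.

Geometric noetherianity fails for the relators `rₖ = ⁅a, bᵏ a b⁻ᵏ⁆` of the free group on `a, b`.
Under `a ↦ (0 m)`, `b ↦ (x ↦ x + 1)` in `Perm ℤ`, the relator `rₖ` maps to the commutator of the
transpositions `(0 m)` and `(k m+k)`, which is trivial exactly when `k ≠ m`. So `rₘ` is not in the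
normal closure of any finite set of relators avoiding it.
-/

open Subgroup

theorem Subgroup.mem_normalClosure_finite_of_mem_normalClosure {G : Type*} [Group G]
    {S : Set G} {w : G} (hw : w ∈ normalClosure S) :
    ∃ S₀ : Finset G, ↑S₀ ⊆ S ∧ w ∈ normalClosure (S₀ : Set G) := by
  classical
  induction hw using closure_induction with
  | mem x hx =>
    obtain ⟨a, haS, hax⟩ := Group.mem_conjugatesOfSet_iff.1 hx
    exact ⟨{a}, by simpa using haS, conjugatesOfSet_subset_normalClosure
      (Group.mem_conjugatesOfSet_iff.2 ⟨a, by simp, hax⟩)⟩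
  | one => exact ⟨∅, by simp, one_mem _⟩
  | mul x y _ _ hx hy =>
    obtain ⟨A, hAS, hxA⟩ := hx
    obtain ⟨B, hBS, hyB⟩ := hy
    refine ⟨A ∪ B, by simpa using ⟨hAS, hBS⟩, mul_mem ?_ ?_⟩
    · exact normalClosure_mono (by simp) hxA
    · exact normalClosure_mono (by simp) hyB
  | inv x _ hx =>
    obtain ⟨A, hAS, hxA⟩ := hx
    exact ⟨A, hAS, inv_mem hxA⟩

section GClosure

variable {H : Type*} [Group H] {n : ℕ}

theorem normalClosure_subset_gClosure (S : Set (FreeGroup (Fin n))) :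
    (normalClosure S : Set (FreeGroup (Fin n))) ⊆ GClosure H S :=
  fun _ hw φ hφ => normalClosure_le_normal (N := φ.ker) hφ hw

theorem gClosure_subset_normalClosure_of_injective {S : Set (FreeGroup (Fin n))}
    {f : PresentedGroup S →* H} (hf : Function.Injective f) :
    GClosure H S ⊆ normalClosure S := fun w hw => by
  rw [SetLike.mem_coe, ← PresentedGroup.mk_eq_one_iff, ← map_eq_one_iff f hf]
  exact hw (f.comp (PresentedGroup.mk S)) fun s hs => by
    simp [PresentedGroup.one_of_mem hs]

theorem logicallyNoetherian_of_gClosure_eq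
    (h : ∀ n (S : Set (FreeGroup (Fin n))), GClosure H S = normalClosure S) :
    LogicallyNoetherian H := by
  intro n S w hw
  rw [h] at hw
  obtain ⟨S₀, hS₀S, hw₀⟩ := mem_normalClosure_finite_of_mem_normalClosure hw
  exact ⟨S₀, hS₀S, h n _ ▸ hw₀⟩

end GClosure

open scoped commutatorElement

def commRel (k : ℕ) : FreeGroup (Fin 2) :=
  ⁅FreeGroup.of (0 : Fin 2), FreeGroup.of 1 ^ k * FreeGroup.of 0 * (FreeGroup.of 1 ^ k)⁻¹⁆

noncomputable def permRep (m : ℕ) : FreeGroup (Fin 2) →* Equiv.Perm ℤ :=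
  FreeGroup.lift ![Equiv.swap 0 (m : ℤ), Equiv.addRight 1]

theorem permRep_commRel (m k : ℕ) :
    permRep m (commRel k) = ⁅Equiv.swap 0 (m : ℤ), Equiv.swap (k : ℤ) (m + k)⁆ := by
  have hconj : Equiv.addRight (k : ℤ) * Equiv.swap 0 (m : ℤ) * (Equiv.addRight (k : ℤ))⁻¹ =
      Equiv.swap (k : ℤ) (m + k) := by
    rw [← Equiv.swap_apply_apply]; simp [add_comm]
  simpa [commRel, permRep] using congrArg (⁅Equiv.swap 0 (m : ℤ), ·⁆) hconj

theorem permRep_commRel_eq_one_iff {m : ℕ} (hm : m ≠ 0) (k : ℕ) :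
    permRep m (commRel k) = 1 ↔ k ≠ m := by
  rw [permRep_commRel, commutatorElement_eq_one_iff_commute]
  constructor
  · rintro h rfl
    have := congrArg (· 0) h.eq
    simp only [Equiv.Perm.mul_apply, Equiv.swap_apply_def] at this
    split_ifs at this <;> omega
  · intro hkm
    rcases Nat.eq_zero_or_pos k with rfl | hk
    · simp
    · exact (Equiv.Perm.disjoint_swap_swap (by simp; omega)).commute

theorem commRel_notMem_normalClosure_image {m : ℕ} (hm : m ≠ 0) {T : Set ℕ} (hmT : m ∉ T) :
    commRel m ∉ normalClosure (commRel '' T) := fun hmem => by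
  have hker : normalClosure (commRel '' T) ≤ (permRep m).ker := by
    refine normalClosure_le_normal ?_
    rintro _ ⟨k, hkT, rfl⟩
    exact (permRep_commRel_eq_one_iff hm k).2 (ne_of_mem_of_not_mem hkT hmT)
  exact (permRep_commRel_eq_one_iff hm m).1 (hker hmem) rfl

theorem normalClosure_finset_ne_normalClosure_range_commRel {S₀ : Finset (FreeGroup (Fin 2))}
    (hS₀ : ↑S₀ ⊆ Set.range commRel) :
    normalClosure (S₀ : Set (FreeGroup (Fin 2))) ≠ normalClosure (Set.range commRel) := by
  classical
  rw [← Set.image_univ] at hS₀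
  obtain ⟨T, -, rfl⟩ := Finset.subset_set_image_iff.1 hS₀
  obtain ⟨m, hm⟩ := Infinite.exists_notMem_finset (insert 0 T)
  rw [Finset.mem_insert, not_or] at hm
  intro heq
  refine commRel_notMem_normalClosure_image hm.1 (T := ↑T) hm.2 ?_
  rw [← Finset.coe_image, heq]
  exact subset_normalClosure ⟨m, rfl⟩

theorem not_geometricallyNoetherian_of_gClosure_eq {H : Type*} [Group H]
    (h : ∀ S : Set (FreeGroup (Fin 2)), GClosure H S = normalClosure S) :
    ¬ GeometricallyNoetherian H := fun hgeo => by
  obtain ⟨S₀, hS₀, heq⟩ := hgeo 2 (Set.range commRel)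
  rw [h, h] at heq
  exact normalClosure_finset_ne_normalClosure_range_commRel hS₀ (SetLike.coe_injective heq)

abbrev PresentedProduct : Type :=
  ∀ p : Σ n : ℕ, Set (FreeGroup (Fin n)), PresentedGroup p.2

theorem gClosure_presentedProduct {n : ℕ} (S : Set (FreeGroup (Fin n))) :
    GClosure PresentedProduct S = normalClosure S := by
  classical
  refine (gClosure_subset_normalClosure_of_injective (f := MonoidHom.mulSingle
    (fun p : Σ n : ℕ, Set (FreeGroup (Fin n)) => PresentedGroup p.2) ⟨n, S⟩) ?_).antisymm
    (normalClosure_subset_gClosure S)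
  exact Pi.mulSingle_injective
    (M := fun p : Σ n : ℕ, Set (FreeGroup (Fin n)) => PresentedGroup p.2) _

/-- There is a group that is logically noetherian but not geometrically noetherian. -/
theorem exists_logicallyNoetherian_not_geometricallyNoetherian :
    ∃ (H : Type) (instH : Group H),
      @LogicallyNoetherian H instH ∧ ¬ @GeometricallyNoetherian H instH := by
  refine ⟨PresentedProduct, inferInstance, ?_, ?_⟩
  · exact logicallyNoetherian_of_gClosure_eq fun _ => gClosure_presentedProduct
  · exact not_geometricallyNoetherian_of_gClosure_eq gClosure_presentedProduct
end

section
/- (Zhitomirsky) Let C be a category in which all isomorphism classes of objects have pairwise the same cardinality: for all objects A and B, the cardinality of {X : C // Nonempty (X ≅ A)} equals the cardinality of {X : C // Nonempty (X ≅ B)}. Then every autoequivalence of C is isomorphic to an automorphism: for every equivalence F : C ⥤ C there exists a functor G : C ⥤ C that is full, faithful, and bijective on objects (hence an isomorphism of categories), together with a natural isomorphism F ≅ G. -/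
open CategoryTheory

universe v u

/-- (Zhitomirsky) If all isomorphism classes of objects of `C` have pairwise the same
cardinality, then every autoequivalence of `C` is isomorphic to an automorphism of `C`
(a functor that is full, faithful, and bijective on objects). -/
theorem autoequivalence_iso_automorphism {C : Type u} [Category.{v} C]
    (h : ∀ A B : C,
      Cardinal.mk {X : C // Nonempty (X ≅ A)} = Cardinal.mk {X : C // Nonempty (X ≅ B)})
    (F : C ⥤ C) (hF : F.IsEquivalence) :
    ∃ G : C ⥤ C, G.Full ∧ G.Faithful ∧ Function.Bijective G.obj ∧ Nonempty (F ≅ G) := by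
  classical
  haveI := hF
  letI s : Setoid C := isIsomorphicSetoid C
  let E := F.asEquivalence
  -- the bijection induced by `F` on isomorphism classes
  let Fq : Quotient s ≃ Quotient s :=
  { toFun := Quotient.map F.obj (fun X Y ⟨e⟩ => ⟨F.mapIso e⟩)
    invFun := Quotient.map E.inverse.obj (fun X Y ⟨e⟩ => ⟨E.inverse.mapIso e⟩)
    left_inv := by
      intro q; induction q using Quotient.ind with
      | _ X => exact Quotient.sound ⟨(E.unitIso.app X).symm⟩
    right_inv := by
      intro q; induction q using Quotient.ind with
      | _ X => exact Quotient.sound ⟨E.counitIso.app X⟩ }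
  -- each fiber of the quotient map is equivalent to an iso class
  have fibEquiv : ∀ q : Quotient s,
      {X : C // Quotient.mk s X = q} ≃ {X : C // Nonempty (X ≅ q.out)} := by
    intro q
    refine Equiv.subtypeEquivRight fun X => ?_
    conv_lhs => rw [← Quotient.out_eq q]
    exact ⟨fun hh => Quotient.exact hh, fun hh => Quotient.sound hh⟩
  -- fiberwise equivalences using the cardinality hypothesis
  let cardEquiv : ∀ q : Quotient s,
      {X : C // Quotient.mk s X = q} ≃ {X : C // Quotient.mk s X = Fq q} := fun q =>
    ((fibEquiv q).trans (Classical.choice (Cardinal.eq.mp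
      (h (q.out) ((Fq q).out))))).trans (fibEquiv (Fq q)).symm
  -- the object bijection
  let φ : C ≃ C :=
    (Equiv.sigmaFiberEquiv (fun X : C => Quotient.mk s X)).symm.trans
      ((Equiv.sigmaCongr Fq cardEquiv).trans
        (Equiv.sigmaFiberEquiv (fun X : C => Quotient.mk s X)))
  have hφ : ∀ X : C, Quotient.mk s (φ X) = Fq (Quotient.mk s X) := by
    intro X
    have : φ X = ((cardEquiv (Quotient.mk s X)) ⟨X, rfl⟩).val := rfl
    rw [this]
    exact ((cardEquiv (Quotient.mk s X)) ⟨X, rfl⟩).property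
  have hiso : ∀ X : C, Nonempty (φ X ≅ F.obj X) := by
    intro X
    have h2 : Fq (Quotient.mk s X) = Quotient.mk s (F.obj X) := rfl
    exact Quotient.exact ((hφ X).trans h2)
  let i : ∀ X : C, φ X ≅ F.obj X := fun X => Classical.choice (hiso X)
  let G : C ⥤ C :=
  { obj := φ
    map := fun {X Y} f => (i X).hom ≫ F.map f ≫ (i Y).inv
    map_id := by intros; simp
    map_comp := by intros; simp }
  have e : F ≅ G := NatIso.ofComponents (fun X => (i X).symm) (by
    intro X Y f
    simp [G])
  exact ⟨G, Functor.Full.of_iso e, Functor.Faithful.of_iso e, φ.bijective, ⟨e⟩⟩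
end

section
/- Let C and D be categories and κ a cardinal such that every isomorphism class of objects of C has cardinality κ and every isomorphism class of objects of D has cardinality κ. Then every equivalence between C and D is naturally isomorphic to an isomorphism of categories: for every equivalence F : C ⥤ D there exists a functor G : C ⥤ D that is full, faithful, and bijective on objects, together with a natural isomorphism F ≅ G. In particular, if C and D are equivalent then they are isomorphic. -/
open CategoryTheory

universe v v' u

/-- If two maps into `Z` have equinumerous fibers, there is a bijection commuting with them. -/
lemma exists_bijective_fiberwise {A B Z : Type u} (f : A → Z) (g : B → Z)
    (h : ∀ z, Cardinal.mk {a : A // f a = z} = Cardinal.mk {b : B // g b = z}) :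
    ∃ φ : A → B, Function.Bijective φ ∧ ∀ a, g (φ a) = f a := by
  have e : ∀ z, {a : A // f a = z} ≃ {b : B // g b = z} :=
    fun z => (Cardinal.eq.mp (h z)).some
  let Φ : A ≃ B :=
    (Equiv.sigmaFiberEquiv f).symm.trans
      ((Equiv.sigmaCongrRight e).trans (Equiv.sigmaFiberEquiv g))
  refine ⟨Φ, Φ.bijective, fun a => ?_⟩
  simp only [Φ, Equiv.trans_apply, Equiv.sigmaFiberEquiv, Equiv.sigmaCongrRight]
  exact (e (f a) ⟨a, rfl⟩).2

/-- If every isomorphism class of objects of `C` and of `D` has cardinality `κ`, then every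
equivalence `C ⥤ D` is naturally isomorphic to an isomorphism of categories (a functor that
is full, faithful, and bijective on objects). In particular, if `C` and `D` are equivalent
then they are isomorphic. -/
theorem equivalence_iso_isomorphism_of_iso_classes_card
    {C : Type u} {D : Type u} [Category.{v} C] [Category.{v'} D] (κ : Cardinal.{u})
    (hC : ∀ A : C, Cardinal.mk {X : C // Nonempty (X ≅ A)} = κ)
    (hD : ∀ B : D, Cardinal.mk {X : D // Nonempty (X ≅ B)} = κ)
    (F : C ⥤ D) (hF : F.IsEquivalence) :
    ∃ G : C ⥤ D, G.Full ∧ G.Faithful ∧ Function.Bijective G.obj ∧ Nonempty (F ≅ G) := by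
  haveI := hF
  let Z := Quotient (isIsomorphicSetoid D)
  let f : C → Z := fun X => Quotient.mk _ (F.obj X)
  let g : D → Z := fun B => Quotient.mk _ B
  have hfib : ∀ z, Cardinal.mk {a : C // f a = z} = Cardinal.mk {b : D // g b = z} := by
    intro z
    induction z using Quotient.inductionOn with
    | h B₀ =>
      obtain ⟨A, ⟨eA⟩⟩ := Functor.EssSurj.mem_essImage (F := F) B₀
      have h1 : ∀ X : C, f X = Quotient.mk _ B₀ ↔ Nonempty (X ≅ A) := by
        intro X
        constructor
        · intro hX
          obtain ⟨i⟩ := Quotient.exact hX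
          exact ⟨F.preimageIso (i ≪≫ eA.symm)⟩
        · intro ⟨i⟩
          exact Quotient.sound ⟨F.mapIso i ≪≫ eA⟩
      have h2 : ∀ B : D, g B = Quotient.mk _ B₀ ↔ Nonempty (B ≅ B₀) := by
        intro B
        exact ⟨fun hB => Quotient.exact hB, fun h => Quotient.sound h⟩
      rw [Cardinal.mk_congr (Equiv.subtypeEquivRight h1),
        Cardinal.mk_congr (Equiv.subtypeEquivRight h2), hC A, hD B₀]
  obtain ⟨φ, hbij, hcomm⟩ := exists_bijective_fiberwise f g hfib
  have e : ∀ X : C, F.obj X ≅ φ X := by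
    intro X
    have : Nonempty (φ X ≅ F.obj X) := Quotient.exact (hcomm X)
    exact this.some.symm
  refine ⟨F.copyObj φ e, ?_, ?_, hbij, ⟨F.isoCopyObj φ e⟩⟩
  · exact Functor.Full.of_iso (F.isoCopyObj φ e)
  · exact Functor.Faithful.of_iso (F.isoCopyObj φ e)
end

section
/- Let C be a category and F : C ⥤ C an equivalence that is special, i.e., F.obj A is isomorphic to A for every object A. Then F can be represented as F = F₁ ⋙ F₀ (apply F₁ first, then F₀), where F₀ : C ⥤ C is naturally isomorphic to the identity functor 𝟭 C, and F₁ : C ⥤ C is an automorphism that does not change objects: F₁.obj A = A for every A, and F₁ is full and faithful. In particular, F is naturally isomorphic to an automorphism of C fixing all objects. -/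
open CategoryTheory

universe v u

/-- A special autoequivalence `F` (one with `F.obj A ≅ A` for all `A`) factors as
`F = F₁ ⋙ F₀` where `F₀` is an inner autoequivalence (naturally isomorphic to the identity)
and `F₁` is an automorphism fixing all objects. -/
theorem special_autoequivalence_factorization {C : Type u} [Category.{v} C]
    (F : C ⥤ C) (hF : F.IsEquivalence) (hspec : ∀ A : C, Nonempty (F.obj A ≅ A)) :
    ∃ F₀ F₁ : C ⥤ C, F = F₁ ⋙ F₀ ∧ Nonempty (F₀ ≅ 𝟭 C) ∧
      (∀ A : C, F₁.obj A = A) ∧ F₁.Full ∧ F₁.Faithful := by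
  have := hF
  let e : ∀ A : C, F.obj A ≅ A := fun A => (hspec A).some
  let F₀ : C ⥤ C :=
    { obj := fun A => F.obj A
      map := fun {A B} f => (e A).hom ≫ f ≫ (e B).inv
      map_id := by intros; simp
      map_comp := by intros; simp }
  let F₁ : C ⥤ C :=
    { obj := fun A => A
      map := fun {A B} f => (e A).inv ≫ F.map f ≫ (e B).hom
      map_id := by intros; simp
      map_comp := by intros; simp }
  refine ⟨F₀, F₁, ?_, ⟨?_⟩, fun A => rfl, ?_, ?_⟩
  · refine CategoryTheory.Functor.ext (fun A => rfl) ?_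
    intro A B f
    simp [F₀, F₁]
  · exact NatIso.ofComponents (fun A => e A) (by intros; simp [F₀])
  · constructor
    intro A B g
    refine ⟨F.preimage ((e A).hom ≫ g ≫ (e B).inv), ?_⟩
    simp [F₁]
  · constructor
    intro A B f g h
    simp only [F₁] at h
    have : F.map f = F.map g := by
      have := congrArg (fun x => (e A).hom ≫ x ≫ (e B).inv) h
      simpa using this
    exact F.map_injective this
end

section
/- Let P be a field and H₁, H₂ associative unital P-algebras that are anti-isomorphic, i.e., there is a P-algebra isomorphism H₁ ≃ₐ[P] H₂ᵐᵒᵖ. Fix n and let r : FreeAlgebra P (Fin n) →ₐ[P] (FreeAlgebra P (Fin n))ᵐᵒᵖ be the P-algebra homomorphism determined by r (ι i) = op (ι i) for every generator, and set η w = unop (r w) (the reversal anti-automorphism of the free algebra). Then for every set S ⊆ FreeAlgebra P (Fin n) and every w ∈ FreeAlgebra P (Fin n), w ∈ cl_{H₁}(S) if and only if η w ∈ cl_{H₂}(η '' S). In particular, a two-sided ideal T of FreeAlgebra P (Fin n) is H₁-closed (T = cl_{H₁}(T) as sets) if and only if its reversal image η '' T is H₂-closed. -/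
/-- The `P`-algebra homomorphism from the free algebra to its opposite determined by
`r (ι i) = op (ι i)`. -/
noncomputable def revHom (P : Type) [Field P] (n : ℕ) :
    FreeAlgebra P (Fin n) →ₐ[P] (FreeAlgebra P (Fin n))ᵐᵒᵖ :=
  FreeAlgebra.lift P fun i => MulOpposite.op (FreeAlgebra.ι P i)

/-- The reversal anti-automorphism `η` of the free associative algebra. -/
noncomputable def revMap (P : Type) [Field P] (n : ℕ) (w : FreeAlgebra P (Fin n)) :
    FreeAlgebra P (Fin n) :=
  MulOpposite.unop (revHom P n w)

lemma revHom_revMap (P : Type) [Field P] (n : ℕ) (w : FreeAlgebra P (Fin n)) :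
    revHom P n (revMap P n w) = MulOpposite.op w := by
  induction w using FreeAlgebra.induction with
  | grade0 r => simp [revMap, revHom]
  | grade1 i => simp [revMap, revHom]
  | mul x y hx hy =>
      simp only [revMap, map_mul, MulOpposite.unop_mul] at *
      simp [hx, hy]
  | add x y hx hy =>
      simp only [revMap, map_add, MulOpposite.unop_add] at *
      simp [hx, hy]

lemma rev_rev (P : Type) [Field P] (n : ℕ) (w : FreeAlgebra P (Fin n)) :
    revMap P n (revMap P n w) = w := by
  rw [revMap, revHom_revMap]; rfl

lemma key (P : Type) [Field P] (H₁ H₂ : Type) [Ring H₁] [Algebra P H₁] [Ring H₂] [Algebra P H₂]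
    (e : H₁ ≃ₐ[P] H₂ᵐᵒᵖ) (n : ℕ) (S : Set (FreeAlgebra P (Fin n))) (w : FreeAlgebra P (Fin n))
    (hw : w ∈ AClosure P H₁ S) : revMap P n w ∈ AClosure P H₂ (revMap P n '' S) := by
  intro φ hφ
  set ψ : FreeAlgebra P (Fin n) →ₐ[P] H₁ :=
    e.symm.toAlgHom.comp ((AlgHom.op φ).comp (revHom P n)) with hψdef
  have hψapp : ∀ x, ψ x = e.symm (MulOpposite.op (φ (revMap P n x))) := fun x => rfl
  have hψ : ∀ s ∈ S, ψ s = 0 := by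
    intro s hs
    rw [hψapp, hφ _ ⟨s, hs, rfl⟩]
    simp
  have h0 := hw ψ hψ
  rw [hψapp] at h0
  have : MulOpposite.op (φ (revMap P n w)) = 0 := by
    have := congrArg e h0
    simpa using this
  simpa using congrArg MulOpposite.unop this

/-- If `H₁` and `H₂` are anti-isomorphic `P`-algebras, then `w ∈ cl_{H₁}(S)` iff
`η w ∈ cl_{H₂}(η '' S)`; in particular a two-sided ideal `T` of the free algebra is
`H₁`-closed iff its reversal image `η '' T` is `H₂`-closed. -/
theorem clos_anti_iso (P : Type) [Field P] (H₁ H₂ : Type)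
    [Ring H₁] [Algebra P H₁] [Ring H₂] [Algebra P H₂]
    (e : H₁ ≃ₐ[P] H₂ᵐᵒᵖ) (n : ℕ) :
    (∀ (S : Set (FreeAlgebra P (Fin n))) (w : FreeAlgebra P (Fin n)),
        w ∈ AClosure P H₁ S ↔ revMap P n w ∈ AClosure P H₂ (revMap P n '' S)) ∧
    (∀ T : TwoSidedIdeal (FreeAlgebra P (Fin n)),
        ((T : Set (FreeAlgebra P (Fin n))) = AClosure P H₁ (T : Set (FreeAlgebra P (Fin n)))) ↔
          (revMap P n '' (T : Set (FreeAlgebra P (Fin n))) =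
            AClosure P H₂ (revMap P n '' (T : Set (FreeAlgebra P (Fin n)))))) := by
  have e' : H₂ ≃ₐ[P] H₁ᵐᵒᵖ := (AlgEquiv.opOp P H₂).trans (AlgEquiv.op e).symm
  have himg : ∀ S : Set (FreeAlgebra P (Fin n)), revMap P n '' (revMap P n '' S) = S := by
    intro S
    rw [Set.image_image]
    simp [rev_rev, Set.image_id']
  have main : ∀ (S : Set (FreeAlgebra P (Fin n))) (w : FreeAlgebra P (Fin n)),
      w ∈ AClosure P H₁ S ↔ revMap P n w ∈ AClosure P H₂ (revMap P n '' S) := by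
    intro S w
    constructor
    · exact key P H₁ H₂ e n S w
    · intro h
      have := key P H₂ H₁ e' n (revMap P n '' S) (revMap P n w) h
      rwa [rev_rev, himg] at this
  refine ⟨main, fun T => ?_⟩
  constructor
  · intro h
    ext x
    constructor
    · rintro ⟨t, ht, rfl⟩
      exact (main _ t).mp (h ▸ ht)
    · intro hx
      have : revMap P n x ∈ AClosure P H₁ (T : Set (FreeAlgebra P (Fin n))) := by
        rw [main]
        rwa [rev_rev]
      exact ⟨revMap P n x, h ▸ this, rev_rev P n x⟩
  · intro h
    ext w
    constructor
    · intro hw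
      exact fun φ hφ => hφ w hw
    · intro hw
      have := (main _ w).mp hw
      rw [← h] at this
      obtain ⟨t, ht, hte⟩ := this
      have : t = w := by
        have := congrArg (revMap P n) hte
        rwa [rev_rev, rev_rev] at this
      rwa [← this]
end

section
/- Let H be a group, n a natural number, and N a normal subgroup of F = FreeGroup (Fin n). Then the following are equivalent: (i) N is H-closed, i.e., the underlying set of N equals cl_H(N); (ii) homomorphisms into H separate the points of the quotient group F ⧸ N; (iii) there exist a type ι and an injective group homomorphism from F ⧸ N into the Cartesian power ι → H. -/
/-- For a normal subgroup `N` of the free group `F = FreeGroup (Fin n)`, the following are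
equivalent: (i) `N` is `H`-closed; (ii) homomorphisms into `H` separate the points of
`F ⧸ N`; (iii) `F ⧸ N` embeds into a Cartesian power of `H`. -/
theorem hClosed_iff_separated_iff_embeds (H : Type) [Group H] (n : ℕ)
    (N : Subgroup (FreeGroup (Fin n))) [N.Normal] :
    (((N : Set (FreeGroup (Fin n))) = GClosure H (N : Set (FreeGroup (Fin n)))) ↔
        (∀ a b : FreeGroup (Fin n) ⧸ N, a ≠ b →
          ∃ φ : FreeGroup (Fin n) ⧸ N →* H, φ a ≠ φ b)) ∧
    ((∀ a b : FreeGroup (Fin n) ⧸ N, a ≠ b →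
          ∃ φ : FreeGroup (Fin n) ⧸ N →* H, φ a ≠ φ b) ↔
        ∃ (ι : Type) (f : FreeGroup (Fin n) ⧸ N →* (ι → H)), Function.Injective f) := by
  constructor
  · constructor
    · intro h a b hab
      induction a using QuotientGroup.induction_on with | H a => ?_
      induction b using QuotientGroup.induction_on with | H b => ?_
      have hmem : a⁻¹ * b ∉ N := fun hm => hab (QuotientGroup.eq.mpr hm)
      have : a⁻¹ * b ∉ GClosure H (N : Set (FreeGroup (Fin n))) := h ▸ hmem
      simp only [GClosure, Set.mem_setOf_eq, not_forall] at this
      obtain ⟨φ, hφN, hφw⟩ := this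
      refine ⟨QuotientGroup.lift N φ (fun s hs => hφN s hs), fun he => hφw ?_⟩
      have ha : QuotientGroup.lift N φ (fun s hs => hφN s hs) (↑a) = φ a := rfl
      have hb : QuotientGroup.lift N φ (fun s hs => hφN s hs) (↑b) = φ b := rfl
      rw [ha, hb] at he
      simp [map_mul, map_inv, ← he]
    · intro h
      apply Set.Subset.antisymm
      · intro w hw φ hφ
        exact hφ w hw
      · intro w hw
        by_contra hwN
        have hne : (↑w : FreeGroup (Fin n) ⧸ N) ≠ 1 := by
          simpa [QuotientGroup.eq_one_iff] using hwN
        obtain ⟨φ, hφ⟩ := h (↑w) 1 hne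
        have := hw (φ.comp (QuotientGroup.mk' N)) (fun s hs => by
          simp only [MonoidHom.comp_apply, QuotientGroup.mk'_apply]
          rw [show ((s : FreeGroup (Fin n)) : FreeGroup (Fin n) ⧸ N) = 1 from (QuotientGroup.eq_one_iff s).mpr hs, map_one])
        exact hφ (by simpa using this)
  · constructor
    · intro h
      refine ⟨(FreeGroup (Fin n) ⧸ N →* H),
        { toFun := fun x φ => φ x,
          map_one' := by funext φ; simp,
          map_mul' := fun x y => by funext φ; simp }, ?_⟩
      intro a b hab
      by_contra hne
      obtain ⟨φ, hφ⟩ := h a b hne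
      exact hφ (congrFun hab φ)
    · rintro ⟨ι, f, hf⟩ a b hab
      have : f a ≠ f b := fun he => hab (hf he)
      obtain ⟨i, hi⟩ := Function.ne_iff.mp this
      exact ⟨(Pi.evalMonoidHom (fun _ => H) i).comp f, hi⟩
end

section
/- Let P be a field, G a simple group, and V a two-sided ideal of the group algebra MonoidAlgebra P G with V ≠ ⊤. Then either V equals the augmentation ideal (that is, an element a ∈ MonoidAlgebra P G lies in V if and only if the sum of its coefficients is 0), or V is faithful: for every g ∈ G, if (of g) - 1 ∈ V then g = 1. -/
/-!
The elements `g` with `of g - 1 ∈ V` form a normal subgroup of `G`: the kernel of the action of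
`G` on `k[G] ⧸ V`. For simple `G` it is trivial, which is faithfulness, or all of `G`. In the
latter case `V` contains every `of g - 1`, hence every `a - ε(a)`, where `ε` is the augmentation;
so `V` contains the augmentation ideal, and since a proper ideal contains no nonzero scalar,
`V` is exactly the augmentation ideal.
-/

namespace TwoSidedIdeal

theorem eq_zero_of_algebraMap_mem {K A : Type*} [Field K] [Ring A] [Algebra K A]
    {V : TwoSidedIdeal A} (hV : V ≠ ⊤) {c : K} (hc : algebraMap K A c ∈ V) : c = 0 := by
  by_contra hc0
  refine hV (V.eq_top ?_)
  simpa [← map_mul, inv_mul_cancel₀ hc0] using V.mul_mem_left (algebraMap K A c⁻¹) _ hc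

end TwoSidedIdeal

namespace MonoidAlgebra

section Augmentation

variable (k G : Type*) [CommSemiring k] [Monoid G]

noncomputable def augmentation : MonoidAlgebra k G →ₐ[k] k :=
  lift k k G 1

variable {k G}

theorem augmentation_apply (a : MonoidAlgebra k G) :
    augmentation k G a = a.coeff.sum fun _ c => c := by
  simp [augmentation, lift_apply]

@[simp]
theorem augmentation_single (g : G) (c : k) : augmentation k G (single g c) = c := by
  simp [augmentation, lift_single]

end Augmentation

section IdealKernel

variable {k G : Type*} [Ring k] [Group G]

def idealKernel (V : TwoSidedIdeal (MonoidAlgebra k G)) : Subgroup G where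
  carrier := {g | of k G g - 1 ∈ V}
  one_mem' := by rw [Set.mem_ofPred_eq, map_one, sub_self]; exact V.zero_mem
  mul_mem' {g h} hg hh := by
    have : of k G (g * h) - 1 = of k G g * (of k G h - 1) + (of k G g - 1) := by
      rw [map_mul]; noncomm_ring
    rw [Set.mem_ofPred_eq, this]
    exact V.add_mem (V.mul_mem_left _ _ hh) hg
  inv_mem' {g} hg := by
    have : of k G g⁻¹ - 1 = -(of k G g⁻¹ * (of k G g - 1)) := by
      rw [mul_sub, ← map_mul, inv_mul_cancel, map_one, mul_one, neg_sub]
    rw [Set.mem_ofPred_eq, this]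
    exact V.neg_mem (V.mul_mem_left _ _ hg)

theorem mem_idealKernel {V : TwoSidedIdeal (MonoidAlgebra k G)} {g : G} :
    g ∈ idealKernel V ↔ of k G g - 1 ∈ V :=
  Iff.rfl

instance idealKernel_normal (V : TwoSidedIdeal (MonoidAlgebra k G)) :
    (idealKernel V).Normal where
  conj_mem n hn g := by
    have : of k G (g * n * g⁻¹) - 1 = of k G g * (of k G n - 1) * of k G g⁻¹ := by
      rw [mul_sub, sub_mul, ← map_mul, ← map_mul, mul_one, ← map_mul, mul_inv_cancel, map_one]
    rw [mem_idealKernel, this]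
    exact V.mul_mem_right _ _ (V.mul_mem_left _ _ (mem_idealKernel.mp hn))

end IdealKernel

section AugmentationIdeal

variable {k G : Type*} [Monoid G]

theorem sub_algebraMap_augmentation_mem [CommRing k] {V : TwoSidedIdeal (MonoidAlgebra k G)}
    (hV : ∀ g, of k G g - 1 ∈ V) (a : MonoidAlgebra k G) :
    a - algebraMap k _ (augmentation k G a) ∈ V := by
  induction a using MonoidAlgebra.induction_linear with
  | zero => simp [V.zero_mem]
  | add a b ha hb =>
    simpa [add_sub_add_comm] using V.add_mem ha hb
  | single g c =>
    have : single g c - algebraMap k _ c = algebraMap k _ c * (of k G g - 1) := by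
      rw [mul_sub, mul_one, ← smul_eq_mul, algebraMap_smul, of_apply, smul_single', mul_one]
    rw [augmentation_single, this]
    exact V.mul_mem_left _ _ (hV g)

theorem mem_iff_augmentation_eq_zero [Field k] {V : TwoSidedIdeal (MonoidAlgebra k G)}
    (hV_ne_top : V ≠ ⊤) (hV : ∀ g, of k G g - 1 ∈ V) (a : MonoidAlgebra k G) :
    a ∈ V ↔ augmentation k G a = 0 := by
  have ha := sub_algebraMap_augmentation_mem hV a
  refine ⟨fun haV => V.eq_zero_of_algebraMap_mem hV_ne_top ?_, fun h => ?_⟩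
  · simpa using V.sub_mem haV ha
  · simpa [h] using ha

end AugmentationIdeal

end MonoidAlgebra

open MonoidAlgebra in
/-- For a simple group `G`, every proper two-sided ideal of the group algebra
`MonoidAlgebra P G` is either the augmentation ideal or faithful. -/
theorem twoSidedIdeal_group_algebra_augmentation_or_faithful
    (P : Type) [Field P] (G : Type) [Group G] [IsSimpleGroup G]
    (V : TwoSidedIdeal (MonoidAlgebra P G)) (hV : V ≠ ⊤) :
    (∀ a : MonoidAlgebra P G, a ∈ V ↔ Finsupp.sum a.coeff (fun _ c => c) = 0) ∨
    (∀ g : G, (MonoidAlgebra.of P G g) - 1 ∈ V → g = 1) := by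
  rcases (idealKernel_normal V).eq_bot_or_eq_top with hbot | htop
  · right
    intro g hg
    simpa [hbot] using mem_idealKernel.mpr hg
  · left
    intro a
    rw [← augmentation_apply]
    exact mem_iff_augmentation_eq_zero hV
      (fun g => mem_idealKernel.mp (htop ▸ Subgroup.mem_top g)) a
end

section
/- Let P be a field, H a commutative associative unital P-algebra, n a natural number, and S ⊆ MvPolynomial (Fin n) P. Then there exists a finite subset S₀ ⊆ S such that cl_H(S₀) = cl_H(S). In other words, every commutative P-algebra is geometrically noetherian (the variety Com-P is noetherian). -/
/-- The `H`-closure of a set `S` of polynomials in `n` variables over `P`: all `w` killed by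
every `P`-algebra homomorphism to `H` killing `S`. -/
def MClosure (P : Type*) [CommSemiring P] (H : Type*) [CommSemiring H] [Algebra P H] {n : ℕ}
    (S : Set (MvPolynomial (Fin n) P)) : Set (MvPolynomial (Fin n) P) :=
  {w | ∀ φ : MvPolynomial (Fin n) P →ₐ[P] H, (∀ s ∈ S, φ s = 0) → φ w = 0}

/-- Every commutative associative unital algebra over a field is geometrically noetherian:
any system of equations is equivalent to a finite subsystem. -/
theorem comm_algebra_geometricallyNoetherian (P : Type) [Field P]
    (H : Type) [CommRing H] [Algebra P H] (n : ℕ) (S : Set (MvPolynomial (Fin n) P)) :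
    ∃ S₀ : Finset (MvPolynomial (Fin n) P), ↑S₀ ⊆ S ∧
      MClosure P H (S₀ : Set (MvPolynomial (Fin n) P)) = MClosure P H S := by
  classical
  -- The polynomial ring is Noetherian, so the ideal generated by `S` is finitely generated.
  have hng : (Ideal.span S).FG := IsNoetherian.noetherian _
  obtain ⟨t, ht⟩ := hng
  -- Each generator lies in the span of a finite subset of `S`.
  have key : ∀ g ∈ (t : Set (MvPolynomial (Fin n) P)),
      ∃ u : Finset (MvPolynomial (Fin n) P), ↑u ⊆ S ∧ g ∈ Ideal.span (u : Set _) := by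
    intro g hg
    have hgs : g ∈ Ideal.span S := by
      rw [← ht]; exact Ideal.subset_span hg
    obtain ⟨u, hu, hmem⟩ := Submodule.mem_span_finite_of_mem_span hgs
    exact ⟨u, hu, hmem⟩
  choose f hfS hfmem using key
  refine ⟨t.attach.biUnion (fun g => f g.1 g.2), ?_, ?_⟩
  · intro x hx
    simp only [Finset.coe_biUnion, Set.mem_iUnion, Finset.mem_coe] at hx
    obtain ⟨g, _, hxg⟩ := hx
    exact hfS g.1 g.2 hxg
  · set S₀ : Finset (MvPolynomial (Fin n) P) := t.attach.biUnion (fun g => f g.1 g.2)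
    have hspan : Ideal.span (S₀ : Set (MvPolynomial (Fin n) P)) = Ideal.span S := by
      apply le_antisymm
      · apply Ideal.span_mono
        intro x hx
        simp only [S₀, Finset.coe_biUnion, Set.mem_iUnion, Finset.mem_coe] at hx
        obtain ⟨g, _, hxg⟩ := hx
        exact hfS g.1 g.2 hxg
      · rw [← ht, Ideal.span_le]
        intro g hg
        have : g ∈ Ideal.span ((f g hg : Set (MvPolynomial (Fin n) P))) := hfmem g hg
        refine Ideal.span_mono ?_ this
        intro x hx
        simp only [S₀, Finset.coe_biUnion, Set.mem_iUnion, Finset.mem_coe]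
        exact ⟨⟨g, hg⟩, Finset.mem_attach _ _, hx⟩
    -- Now show the closures agree.
    have hkill : ∀ (T : Set (MvPolynomial (Fin n) P)) (φ : MvPolynomial (Fin n) P →ₐ[P] H),
        (∀ s ∈ T, φ s = 0) → ∀ x ∈ Ideal.span T, φ x = 0 := by
      intro T φ hT x hx
      have : Ideal.span T ≤ RingHom.ker (φ : MvPolynomial (Fin n) P →+* H) := by
        rw [Ideal.span_le]
        intro s hs
        exact hT s hs
      exact this hx
    ext w
    constructor
    · intro hw φ hφ
      exact hw φ fun s hs => hφ s
        (by
          have := hfS ‹_›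
          exact (by
            simp only [S₀, Finset.coe_biUnion, Set.mem_iUnion, Finset.mem_coe] at hs
            obtain ⟨g, _, hxg⟩ := hs
            exact hfS g.1 g.2 hxg))
    · intro hw φ hφ
      refine hw φ fun s hs => ?_
      exact hkill _ φ hφ s (by rw [hspan]; exact Ideal.subset_span hs)
end
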